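/- arXiv:2406.19979 — 13 statements merged into one kernel-verified Lean document; each statement's English description precedes it below -/
import Mathlib

section
/- For all ε, K > 0 and every g : ℕ → ℕ, set g̃(n) := n + g(n) and N := g̃^(⌈2K/ε⌉)(0) (the ⌈2K/ε⌉-th iterate of g̃ applied to 0). Then for every monotone sequence (x_n) of real numbers contained in [−K, K] there exists n ≤ N such that |x_i − x_j| < ε for all i, j with n ≤ i ≤ j ≤ n + g(n). -/
/-- **Finitary monotone convergence.** For all `ε, K > 0` and every `g : ℕ → ℕ`,
setting `g̃ n := n + g n` and `N := g̃^[⌈2K/ε⌉] 0`, every monotone sequence in `[-K, K]`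
admits some `n ≤ N` with `|x i - x j| < ε` for all `n ≤ i ≤ j ≤ n + g n`. -/
theorem stmt0 (ε K : ℝ) (hε : 0 < ε) (hK : 0 < K) (g : ℕ → ℕ) :
    ∀ x : ℕ → ℝ, (Monotone x ∨ Antitone x) → (∀ n, x n ∈ Set.Icc (-K) K) →
      ∃ n ≤ (fun m => m + g m)^[⌈2 * K / ε⌉₊] 0,
        ∀ i j : ℕ, n ≤ i → i ≤ j → j ≤ n + g n → |x i - x j| < ε := by
  set f : ℕ → ℕ := fun m => m + g m with hf
  set M : ℕ := ⌈2 * K / ε⌉₊ with hM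
  have hle : ∀ (j m : ℕ), m ≤ f^[j] m := by
    intro j
    induction j with
    | zero => intro m; simp
    | succ j ih =>
      intro m
      rw [Function.iterate_succ_apply]
      exact le_trans (Nat.le_add_right m (g m)) (ih (f m))
  have hchain : ∀ k ≤ M, f^[k] 0 ≤ f^[M] 0 := by
    intro k hk
    have h : f^[M] 0 = f^[M - k] (f^[k] 0) := by
      rw [← Function.iterate_add_apply, Nat.sub_add_cancel hk]
    rw [h]; exact hle _ _
  have main : ∀ y : ℕ → ℝ, Monotone y → (∀ n, y n ∈ Set.Icc (-K) K) →
      ∃ n ≤ f^[M] 0, ∀ i j : ℕ, n ≤ i → i ≤ j → j ≤ n + g n → |y i - y j| < ε := by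
    intro y hy hb
    have key : ∃ k ≤ M, y (f^[k + 1] 0) - y (f^[k] 0) < ε := by
      by_contra h
      push_neg at h
      have hsum : ∑ k ∈ Finset.range (M + 1), (y (f^[k + 1] 0) - y (f^[k] 0))
          = y (f^[M + 1] 0) - y (f^[0] 0) :=
        Finset.sum_range_sub (fun k => y (f^[k] 0)) (M + 1)
      have hlow : (M + 1 : ℝ) * ε ≤ y (f^[M + 1] 0) - y (f^[0] 0) := by
        rw [← hsum]
        calc (M + 1 : ℝ) * ε = ∑ _k ∈ Finset.range (M + 1), ε := by
              simp [mul_comm]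
          _ ≤ _ := Finset.sum_le_sum (fun k hk => h k (Nat.lt_succ_iff.mp
                (Finset.mem_range.mp hk)))
      have hup : y (f^[M + 1] 0) - y (f^[0] 0) ≤ 2 * K := by
        have h1 := (hb (f^[M + 1] 0)).2
        have h2 := (hb (f^[0] 0)).1
        linarith
      have h1 : (M + 1 : ℝ) ≤ 2 * K / ε :=
        (le_div_iff₀ hε).mpr (le_trans hlow hup)
      have h2 : (2 * K / ε : ℝ) ≤ M := Nat.le_ceil _
      linarith
    obtain ⟨k, hk, hlt⟩ := key
    refine ⟨f^[k] 0, hchain k hk, ?_⟩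
    intro i j hi hij hj
    have hnext : f^[k] 0 + g (f^[k] 0) = f^[k + 1] 0 := by
      rw [Function.iterate_succ_apply']
    rw [hnext] at hj
    have h1 : y i ≤ y j := hy hij
    have h2 : y (f^[k] 0) ≤ y i := hy hi
    have h3 : y j ≤ y (f^[k + 1] 0) := hy hj
    rw [abs_sub_comm, abs_of_nonneg (by linarith)]
    linarith
  intro x hx hbdd
  rcases hx with hmono | hanti
  · exact main x hmono hbdd
  · obtain ⟨n, hn, hp⟩ := main (fun n => -x n) (fun a b hab => neg_le_neg (hanti hab))
      (fun n => ⟨neg_le_neg (hbdd n).2, by simpa using neg_le_neg (hbdd n).1⟩)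
    refine ⟨n, hn, fun i j hi hij hj => ?_⟩
    have h := hp i j hi hij hj
    rw [show -x i - -x j = -(x i - x j) by ring, abs_neg] at h
    exact h
end

section
/- Let (x_n) be a sequence of real numbers with |x_n| ≤ M for all n, and suppose ψ : ℝ × ℝ → ℝ satisfies Cr_∞([α,β], x) ≤ ψ(α,β) for all α < β. Then for every ε > 0, Fluc_∞(ε, x) ≤ l · max{ψ(α,β) | [α,β] ∈ P(M,l)}, where l := ⌈4M/ε⌉. -/
/-!
An ε-fluctuation of a sequence with values in `[-M, M]` jumps over a distance at least `ε`, which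
is at least twice the mesh `2M/l` of the partition `𝒫(M, l)`; hence it crosses some interval of the
partition. Sorting the `k` fluctuations by the interval they cross, the fluctuations assigned to one
interval `[α, β]` form a sequence of `[α, β]`-crossings, so there are at most `ψ(α, β) ≤ C` of
them, and `k ≤ l · C`.
-/

/-- There exist `k` many ε-fluctuations in the sequence `x`. -/
def HasFluc (ε : ℝ) (x : ℕ → ℝ) (k : ℕ) : Prop :=
  ∃ i j : ℕ → ℕ, (∀ l < k, i l < j l) ∧ (∀ l, l + 1 < k → j l ≤ i (l + 1)) ∧
    ∀ l < k, ε ≤ |x (i l) - x (j l)|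

/-- There exist `k` many `[α,β]`-crossings in the sequence `x`. -/
def HasCross (α β : ℝ) (x : ℕ → ℝ) (k : ℕ) : Prop :=
  ∃ i j : ℕ → ℕ, (∀ l < k, i l < j l) ∧ (∀ l, l + 1 < k → j l ≤ i (l + 1)) ∧
    ∀ l < k, (x (i l) ≤ α ∧ β ≤ x (j l)) ∨ (β ≤ x (i l) ∧ x (j l) ≤ α)

open Finset

/-- The `i`-th interval of the partition `𝒫(M, l)` is
`[partitionPoint M l i, partitionPoint M l (i + 1)]`. -/
noncomputable def partitionPoint (M : ℝ) (l : ℕ) (t : ℝ) : ℝ := -M + 2 * M * t / l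

lemma partitionPoint_eq (M : ℝ) (l : ℕ) (t : ℝ) :
    partitionPoint M l t = -M + 2 * M / l * t := by
  rw [partitionPoint, mul_div_right_comm]

lemma partitionPoint_lt_succ {M : ℝ} {l : ℕ} (hM : 0 < M) (hl : 0 < l) (t : ℝ) :
    partitionPoint M l t < partitionPoint M l (t + 1) := by
  simp only [partitionPoint_eq]
  have : 0 < 2 * M / l := by positivity
  linarith

lemma exists_partition_interval_between {M ε a b : ℝ} {l : ℕ} (hε : 0 < ε)
    (hεl : 4 * M ≤ ε * l) (ha : -M ≤ a) (hab : a + ε ≤ b) (hb : b ≤ M) :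
    ∃ m < l, a ≤ partitionPoint M l m ∧ partitionPoint M l (m + 1) ≤ b := by
  have hM : 0 < M := by linarith
  have hl : (0 : ℝ) < l := pos_of_mul_pos_right (by linarith) hε.le
  set w := 2 * M / l with hw
  have hw_pos : 0 < w := by positivity
  have hw_le : 2 * w ≤ ε := by rw [hw, ← mul_div_assoc, div_le_iff₀ hl]; linarith
  have hwl : w * l = 2 * M := div_mul_cancel₀ _ hl.ne'
  -- the first partition point to the right of `a`; the next one is still below `a + 2w ≤ b`
  set m := ⌈(a + M) / w⌉₊
  have hm_ge : a + M ≤ w * m := (div_le_iff₀' hw_pos).1 (Nat.le_ceil _)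
  have hm_lt : w * m < a + M + w := by
    have := mul_lt_mul_of_pos_left
      (Nat.ceil_lt_add_one (div_nonneg (by linarith : 0 ≤ a + M) hw_pos.le)) hw_pos
    rwa [mul_add, mul_div_cancel₀ _ hw_pos.ne', mul_one] at this
  refine ⟨m, ?_, ?_, ?_⟩
  · have : w * m < w * l := by linarith
    exact_mod_cast lt_of_mul_lt_mul_left this hw_pos.le
  · rw [partitionPoint_eq]; linarith
  · rw [partitionPoint_eq]; linarith

lemma exists_partition_interval_crossed {M ε a b : ℝ} {l : ℕ} (hε : 0 < ε)
    (hεl : 4 * M ≤ ε * l) (ha : |a| ≤ M) (hb : |b| ≤ M) (hab : ε ≤ |a - b|) :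
    ∃ m < l,
      (a ≤ partitionPoint M l m ∧ partitionPoint M l (m + 1) ≤ b) ∨
      (partitionPoint M l (m + 1) ≤ a ∧ b ≤ partitionPoint M l m) := by
  rw [abs_le] at ha hb
  rcases le_total a b with h | h
  · rw [abs_sub_comm, abs_of_nonneg (sub_nonneg.2 h)] at hab
    obtain ⟨m, hm, hma, hmb⟩ :=
      exists_partition_interval_between hε hεl ha.1 (by linarith) hb.2
    exact ⟨m, hm, .inl ⟨hma, hmb⟩⟩
  · rw [abs_of_nonneg (sub_nonneg.2 h)] at hab
    obtain ⟨m, hm, hmb, hma⟩ :=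
      exists_partition_interval_between hε hεl hb.1 (by linarith) ha.2
    exact ⟨m, hm, .inr ⟨hma, hmb⟩⟩

section Chain

variable {i j : ℕ → ℕ} {k : ℕ}

lemma le_of_chain (hij : ∀ t < k, i t < j t) (hord : ∀ t, t + 1 < k → j t ≤ i (t + 1))
    {s s' : ℕ} (hs : s < s') (hs' : s' < k) : j s ≤ i s' := by
  induction s', hs using Nat.le_induction with
  | base => exact hord s hs'
  | succ n _ ih =>
    exact (ih (by omega)).trans ((hij n (by omega)).le.trans (hord n hs'))

lemma hasCross_card_of_subset {α β : ℝ} {x : ℕ → ℝ}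
    (hij : ∀ t < k, i t < j t) (hord : ∀ t, t + 1 < k → j t ≤ i (t + 1))
    {S : Finset ℕ} (hS : S ⊆ range k)
    (hcross : ∀ t ∈ S, (x (i t) ≤ α ∧ β ≤ x (j t)) ∨ (β ≤ x (i t) ∧ x (j t) ≤ α)) :
    HasCross α β x #S := by
  have hfin : (Set.ofPred (· ∈ S)).Finite := S.finite_toSet
  have hcard : #hfin.toFinset = #S := by congr 1; ext; simp
  set e := Nat.nth (· ∈ S)
  have he_mem : ∀ t < #S, e t ∈ S := fun t ht => Nat.nth_mem_of_lt_card hfin (hcard ▸ ht)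
  have he_lt : ∀ t < #S, e t < k := fun t ht => mem_range.1 (hS (he_mem t ht))
  refine ⟨i ∘ e, j ∘ e, fun t ht => hij _ (he_lt t ht), fun t ht => ?_,
    fun t ht => hcross _ (he_mem t ht)⟩
  exact le_of_chain hij hord (Nat.nth_lt_nth_of_lt_card hfin t.lt_succ_self (hcard ▸ ht))
    (he_lt _ ht)

end Chain

/-- If `|x n| ≤ M` for all `n` and `Cr_∞([α,β], x) ≤ ψ(α,β)` for all `α < β`, then for every
`ε > 0`, `Fluc_∞(ε, x) ≤ l · max{ψ(α,β) | [α,β] ∈ 𝒫(M,l)}` where `l = ⌈4M/ε⌉`.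
(The bound by `l` times the maximum is expressed via an arbitrary upper bound `C` of the
values of `ψ` on the subintervals of the partition `𝒫(M,l)` of `[-M,M]`.) -/
theorem stmt3 (x : ℕ → ℝ) (M : ℝ) (hM : 0 < M) (hx : ∀ n, |x n| ≤ M)
    (ψ : ℝ → ℝ → ℝ)
    (hψ : ∀ α β : ℝ, α < β → ∀ k : ℕ, HasCross α β x k → (k : ℝ) ≤ ψ α β)
    (ε : ℝ) (hε : 0 < ε) (l : ℕ) (hl : l = ⌈4 * M / ε⌉₊)
    (C : ℝ)
    (hC : ∀ i : ℕ, i < l →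
      ψ (-M + 2 * M * (i : ℝ) / (l : ℝ)) (-M + 2 * M * ((i : ℝ) + 1) / (l : ℝ)) ≤ C) :
    ∀ k : ℕ, HasFluc ε x k → (k : ℝ) ≤ (l : ℝ) * C := by
  rintro k ⟨i, j, hij, hord, hjump⟩
  have hεl : 4 * M ≤ ε * l := by
    rw [← div_le_iff₀' hε, hl]; exact Nat.le_ceil _
  have hcrossed : ∀ t ∈ range k, ∃ m ∈ range l,
      (x (i t) ≤ partitionPoint M l m ∧ partitionPoint M l (m + 1) ≤ x (j t)) ∨
      (partitionPoint M l (m + 1) ≤ x (i t) ∧ x (j t) ≤ partitionPoint M l m) := fun t ht => by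
    obtain ⟨m, hm, hcross⟩ :=
      exists_partition_interval_crossed hε hεl (hx (i t)) (hx (j t)) (hjump t (mem_range.1 ht))
    exact ⟨m, mem_range.2 hm, hcross⟩
  choose! f hf hcross using hcrossed
  have hfiber : ∀ m ∈ range l, (#{t ∈ range k | f t = m} : ℝ) ≤ C := fun m hm => by
    have hm := mem_range.1 hm
    refine (hψ _ _ (partitionPoint_lt_succ hM (by omega) m) _ ?_).trans (hC m hm)
    refine hasCross_card_of_subset hij hord (filter_subset _ _) fun t ht => ?_
    obtain ⟨ht, hft⟩ := mem_filter.1 ht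
    exact hft ▸ hcross t ht
  calc (k : ℝ) = ∑ m ∈ range l, (#{t ∈ range k | f t = m} : ℝ) := by
        rw [← Nat.cast_sum, ← card_eq_sum_card_fiberwise hf, card_range]
    _ ≤ ∑ _m ∈ range l, C := sum_le_sum hfiber
    _ = l * C := by rw [sum_const, card_range, nsmul_eq_mul]
end

section
/- Let a_0 < b_0 ≤ a_1 < b_1 ≤ a_2 < b_2 ≤ … be sequences of natural numbers. Then there exists a function g : ℕ → ℕ such that, with g̃(n) := n + g(n), one has g̃^(i)(0) = b_{i−1} for all i ≥ 1, and moreover for every n ∈ ℕ, the interval of integers [a_m, b_m] is contained in [n, n + g(n)], where m is the least index such that n ≤ a_m. -/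
/-- Given natural numbers `a₀ < b₀ ≤ a₁ < b₁ ≤ a₂ < b₂ ≤ …`, there is a function `g : ℕ → ℕ`
such that, with `g̃ n := n + g n`, one has `g̃^[i] 0 = b (i-1)` for all `i ≥ 1`, and for every
`n`, `[a m, b m] ⊆ [n, n + g n]` where `m` is the least index with `n ≤ a m`. -/
theorem stmt4 (a b : ℕ → ℕ) (hab : ∀ n, a n < b n) (hba : ∀ n, b n ≤ a (n + 1)) :
    ∃ g : ℕ → ℕ,
      (∀ i : ℕ, 1 ≤ i → (fun n => n + g n)^[i] 0 = b (i - 1)) ∧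
      (∀ n m : ℕ, n ≤ a m → (∀ m' : ℕ, n ≤ a m' → m ≤ m') →
        Set.Icc (a m) (b m) ⊆ Set.Icc n (n + g n)) := by
  have amono : StrictMono a := strictMono_nat_of_lt_succ fun n =>
    lt_of_lt_of_le (hab n) (hba n)
  have hex : ∀ n : ℕ, ∃ m, n ≤ a m := fun n => ⟨n, amono.le_apply⟩
  refine ⟨fun n => b (Nat.find (hex n)) - n, ?_, ?_⟩
  · have key : ∀ n, n + (b (Nat.find (hex n)) - n) = b (Nat.find (hex n)) := by
      intro n
      have h1 : n ≤ a (Nat.find (hex n)) := Nat.find_spec (hex n)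
      have h2 := hab (Nat.find (hex n))
      omega
    have findb : ∀ k, Nat.find (hex (b k)) = k + 1 := by
      intro k
      rw [Nat.find_eq_iff]
      refine ⟨hba k, fun j hj hle => ?_⟩
      have : a j ≤ a k := amono.monotone (by omega)
      have := hab k
      omega
    intro i hi
    induction i with
    | zero => omega
    | succ i ih =>
      rcases Nat.eq_or_lt_of_le hi with h | h
      · simp only [← h]
        simp only [Function.iterate_one]
        have : Nat.find (hex 0) = 0 := by
          rw [Nat.find_eq_iff]; exact ⟨Nat.zero_le _, by omega⟩
        show 0 + (b (Nat.find (hex 0)) - 0) = b 0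
        rw [key 0, this]
      · have hi1 : 1 ≤ i := by omega
        rw [Function.iterate_succ_apply', ih hi1]
        simp only []
        rw [key (b (i - 1)), findb (i - 1)]
        congr 1
        omega
  · intro n m hn hmin
    have hfind : Nat.find (hex n) = m :=
      le_antisymm (Nat.find_min' _ hn) (hmin _ (Nat.find_spec (hex n)))
    have h1 : n ≤ b m := le_of_lt (lt_of_le_of_lt hn (hab m))
    have : n + (b (Nat.find (hex n)) - n) = b m := by rw [hfind]; omega
    rw [this]
    exact Set.Icc_subset_Icc hn le_rfl
end

section
/- Let (Ω, F, P) be a probability space and A : ℕ × ℕ → F a family of measurable events such that n ≤ n' and m' ≤ m imply A(n', m') ⊆ A(n, m). Then the following are equivalent: (a) P-almost surely there exists n such that ω ∉ A(n, m) for all m ≥ n; (b) for every λ > 0 and every g : ℕ → ℕ there exists n with P(A(n, n + g(n))) < λ; (c) for every λ > 0 and every g : ℕ → ℕ there exists N with P(⋂_{n ≤ N} A(n, n + g(n))) < λ. -/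
open MeasureTheory ENNReal

/-- For a monotone family of events `A n m` (antitone in `n`, monotone in `m`) on a probability
space, the following are equivalent: (a) almost surely there is `n` with `ω ∉ A n m` for all
`m ≥ n`; (b) for all `λ > 0` and `g : ℕ → ℕ` there is `n` with `P(A n (n + g n)) < λ`;
(c) for all `λ > 0` and `g : ℕ → ℕ` there is `N` with `P(⋂_{n ≤ N} A n (n + g n)) < λ`. -/
theorem stmt5 {Ω : Type} [MeasurableSpace Ω] (μ : Measure Ω) [IsProbabilityMeasure μ]
    (A : ℕ → ℕ → Set Ω) (hA : ∀ n m, MeasurableSet (A n m))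
    (hmono : ∀ n n' m m' : ℕ, n ≤ n' → m' ≤ m → A n' m' ⊆ A n m) :
    ((∀ᵐ ω ∂μ, ∃ n : ℕ, ∀ m : ℕ, n ≤ m → ω ∉ A n m) ↔
        (∀ lam : ℝ, 0 < lam → ∀ g : ℕ → ℕ,
          ∃ n : ℕ, μ (A n (n + g n)) < ENNReal.ofReal lam)) ∧
    ((∀ lam : ℝ, 0 < lam → ∀ g : ℕ → ℕ,
          ∃ n : ℕ, μ (A n (n + g n)) < ENNReal.ofReal lam) ↔
        (∀ lam : ℝ, 0 < lam → ∀ g : ℕ → ℕ,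
          ∃ N : ℕ, μ (⋂ n ≤ N, A n (n + g n)) < ENNReal.ofReal lam)) := by
  classical
  set C : ℕ → Set Ω := fun n => ⋃ k, A n (n + k) with hC
  have hCmeas : ∀ n, MeasurableSet (C n) :=
    fun n => MeasurableSet.iUnion fun k => hA n (n + k)
  have hCanti : ∀ n n' : ℕ, n ≤ n' → C n' ⊆ C n := by
    intro n n' h
    refine Set.iUnion_subset fun k => ?_
    refine Set.subset_iUnion_of_subset (n' - n + k) ?_
    have he : n + (n' - n + k) = n' + k := by omega
    rw [he]
    exact hmono n n' (n' + k) (n' + k) h le_rfl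
  have hsub : ∀ n k, A n (n + k) ⊆ C n :=
    fun n k => Set.subset_iUnion (fun k => A n (n + k)) k
  have hCsup : ∀ n, μ (C n) = ⨆ k, μ (A n (n + k)) := by
    intro n
    exact Monotone.measure_iUnion
      (fun k k' hk => hmono n n (n + k') (n + k) le_rfl (by omega))
  -- (a) is equivalent to μ (⋂ n, C n) = 0
  have hset : {ω | ¬ ∃ n : ℕ, ∀ m : ℕ, n ≤ m → ω ∉ A n m} = ⋂ n, C n := by
    ext ω
    simp only [Set.mem_iInter, Set.mem_setOf_eq, hC, Set.mem_iUnion]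
    push_neg
    constructor
    · intro h n
      obtain ⟨m, hm, hmem⟩ := h n
      exact ⟨m - n, by rwa [show n + (m - n) = m by omega]⟩
    · intro h n
      obtain ⟨k, hk⟩ := h n
      exact ⟨n + k, by omega, hk⟩
  have haMeas : (∀ᵐ ω ∂μ, ∃ n : ℕ, ∀ m : ℕ, n ≤ m → ω ∉ A n m) ↔ μ (⋂ n, C n) = 0 := by
    rw [ae_iff, hset]
  have hinf : μ (⋂ n, C n) = ⨅ n, μ (C n) :=
    Antitone.measure_iInter (fun n n' h => hCanti n n' h)
      (fun n => (hCmeas n).nullMeasurableSet) ⟨0, measure_ne_top μ _⟩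
  -- (a) → (b)
  have h_ab : μ (⋂ n, C n) = 0 →
      ∀ lam : ℝ, 0 < lam → ∀ g : ℕ → ℕ, ∃ n, μ (A n (n + g n)) < ENNReal.ofReal lam := by
    intro h0 lam hlam g
    have h1 : ⨅ n, μ (C n) < ENNReal.ofReal lam := by
      rw [← hinf, h0]
      exact ENNReal.ofReal_pos.mpr hlam
    obtain ⟨n, hn⟩ := iInf_lt_iff.mp h1
    exact ⟨n, lt_of_le_of_lt (measure_mono (hsub n (g n))) hn⟩
  -- (b) → (a)
  have h_ba : (∀ lam : ℝ, 0 < lam → ∀ g : ℕ → ℕ,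
      ∃ n, μ (A n (n + g n)) < ENNReal.ofReal lam) → μ (⋂ n, C n) = 0 := by
    intro hb
    by_contra h0
    set ε := μ (⋂ n, C n) with hε
    have hεtop : ε ≠ ∞ := measure_ne_top μ _
    have hεpos : 0 < ε := pos_iff_ne_zero.mpr h0
    have hlam : 0 < ε.toReal / 2 := by
      have := ENNReal.toReal_pos h0 hεtop
      linarith
    have hofeq : ENNReal.ofReal (ε.toReal / 2) = ε / 2 := by
      rw [ENNReal.ofReal_div_of_pos (by norm_num), ENNReal.ofReal_toReal hεtop]
      norm_num
    have hoflt : ENNReal.ofReal (ε.toReal / 2) < ε := by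
      rw [hofeq]
      exact ENNReal.half_lt_self h0 hεtop
    have hchoice : ∀ n, ∃ k, ENNReal.ofReal (ε.toReal / 2) < μ (A n (n + k)) := by
      intro n
      have hCn : ε ≤ μ (C n) := measure_mono (Set.iInter_subset C n)
      have h1 : ENNReal.ofReal (ε.toReal / 2) < ⨆ k, μ (A n (n + k)) :=
        lt_of_lt_of_le hoflt (hCn.trans_eq (hCsup n))
      exact lt_iSup_iff.mp h1
    choose g hg using hchoice
    obtain ⟨n, hn⟩ := hb (ε.toReal / 2) hlam g
    exact absurd hn (not_lt.mpr (hg n).le)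
  -- (b) → (c)
  have h_bc : (∀ lam : ℝ, 0 < lam → ∀ g : ℕ → ℕ,
      ∃ n, μ (A n (n + g n)) < ENNReal.ofReal lam) →
      ∀ lam : ℝ, 0 < lam → ∀ g : ℕ → ℕ,
      ∃ N, μ (⋂ n ≤ N, A n (n + g n)) < ENNReal.ofReal lam := by
    intro hb lam hlam g
    obtain ⟨n, hn⟩ := hb lam hlam g
    refine ⟨n, lt_of_le_of_lt (measure_mono ?_) hn⟩
    exact Set.biInter_subset_of_mem (le_refl n)
  -- (c) → (a)
  have h_ca : (∀ lam : ℝ, 0 < lam → ∀ g : ℕ → ℕ,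
      ∃ N, μ (⋂ n ≤ N, A n (n + g n)) < ENNReal.ofReal lam) → μ (⋂ n, C n) = 0 := by
    intro hc
    by_contra h0
    set ε := μ (⋂ n, C n) with hε
    have hεtop : ε ≠ ∞ := measure_ne_top μ _
    set δ : ℕ → ℝ≥0∞ := fun n => (ε / 2) * (2⁻¹) ^ (n + 1) with hδ
    have hδpos : ∀ n, 0 < δ n := by
      intro n
      have h1 : ε / 2 ≠ 0 := by
        simp [ENNReal.div_eq_zero_iff, h0]
      have h2 : ((2 : ℝ≥0∞)⁻¹) ^ (n + 1) ≠ 0 := by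
        apply pow_ne_zero
        simp
      exact ENNReal.mul_pos h1 h2
    have hδsum : ∑' n, δ n = ε / 2 := by
      rw [hδ, ENNReal.tsum_mul_left]
      have h2 : ∑' n : ℕ, ((2 : ℝ≥0∞)⁻¹) ^ (n + 1) = 1 := by
        have := ENNReal.tsum_geometric (2⁻¹ : ℝ≥0∞)
        calc ∑' n : ℕ, ((2 : ℝ≥0∞)⁻¹) ^ (n + 1)
            = 2⁻¹ * ∑' n : ℕ, ((2 : ℝ≥0∞)⁻¹) ^ n := by
              rw [← ENNReal.tsum_mul_left]
              congr 1 with n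
              rw [pow_succ, mul_comm]
          _ = 1 := by
              rw [this, ENNReal.one_sub_inv_two, inv_inv]
              exact ENNReal.inv_mul_cancel (by norm_num) (by norm_num)
      rw [h2, mul_one]
    have hchoice : ∀ n, ∃ k, μ (C n) ≤ μ (A n (n + k)) + δ n := by
      intro n
      rcases eq_or_ne (μ (C n)) 0 with h | h
      · exact ⟨0, by simp [h]⟩
      · have h1 : μ (C n) - δ n < μ (C n) :=
          ENNReal.sub_lt_self (measure_ne_top μ _) h (hδpos n).ne'
        have h2 : μ (C n) - δ n < ⨆ k, μ (A n (n + k)) := h1.trans_le (hCsup n).le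
        obtain ⟨k, hk⟩ := lt_iSup_iff.mp h2
        exact ⟨k, tsub_le_iff_right.mp hk.le⟩
    choose g hg using hchoice
    have hlam : 0 < ε.toReal / 2 := by
      have := ENNReal.toReal_pos h0 hεtop
      linarith
    have hofeq : ENNReal.ofReal (ε.toReal / 2) = ε / 2 := by
      rw [ENNReal.ofReal_div_of_pos (by norm_num), ENNReal.ofReal_toReal hεtop]
      norm_num
    obtain ⟨N, hN⟩ := hc (ε.toReal / 2) hlam g
    rw [hofeq] at hN
    -- derive contradiction: μ (⋂ n ≤ N, A n (n + g n)) ≥ ε / 2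
    have hcover : C N ⊆ (⋂ n ≤ N, A n (n + g n)) ∪
        ⋃ n ∈ Finset.range (N + 1), (C n \ A n (n + g n)) := by
      intro ω hω
      by_cases hall : ∀ n ≤ N, ω ∈ A n (n + g n)
      · left
        exact Set.mem_iInter₂.mpr hall
      · right
        push_neg at hall
        obtain ⟨n, hnN, hn⟩ := hall
        refine Set.mem_biUnion (Finset.mem_range.mpr (by omega)) ⟨?_, hn⟩
        exact hCanti n N hnN hω
    have hdiff : ∀ n, μ (C n \ A n (n + g n)) ≤ δ n := by
      intro n
      have := measure_diff (hsub n (g n)) (hA n (n + g n)).nullMeasurableSet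
        (measure_ne_top μ _)
      rw [this]
      exact tsub_le_iff_right.mpr ((hg n).trans_eq (add_comm _ _))
    have hbound : ε ≤ μ (⋂ n ≤ N, A n (n + g n)) + ε / 2 := by
      calc ε ≤ μ (C N) := measure_mono (Set.iInter_subset C N)
        _ ≤ μ ((⋂ n ≤ N, A n (n + g n)) ∪
            ⋃ n ∈ Finset.range (N + 1), (C n \ A n (n + g n))) := measure_mono hcover
        _ ≤ μ (⋂ n ≤ N, A n (n + g n)) +
            μ (⋃ n ∈ Finset.range (N + 1), (C n \ A n (n + g n))) := measure_union_le _ _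
        _ ≤ μ (⋂ n ≤ N, A n (n + g n)) + ∑ n ∈ Finset.range (N + 1), μ (C n \ A n (n + g n)) := by
            gcongr
            exact measure_biUnion_finset_le _ _
        _ ≤ μ (⋂ n ≤ N, A n (n + g n)) + ∑ n ∈ Finset.range (N + 1), δ n := by
            gcongr with n
            exact hdiff n
        _ ≤ μ (⋂ n ≤ N, A n (n + g n)) + ε / 2 := by
            gcongr
            rw [← hδsum]
            exact ENNReal.sum_le_tsum _
    have hhalf : ε / 2 ≤ μ (⋂ n ≤ N, A n (n + g n)) := by
      have := tsub_le_iff_right.mpr hbound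
      rwa [ENNReal.sub_half hεtop] at this
    exact absurd hN (not_lt.mpr hhalf)
  refine ⟨?_, ?_⟩
  · rw [haMeas]
    exact ⟨h_ab, h_ba⟩
  · exact ⟨h_bc, fun hc => h_ab (h_ca hc)⟩
end

section
/- Let (Ω, F, P) be a probability space and A : ℕ × ℕ → F a family of measurable events such that n ≤ n' and m' ≤ m imply A(n', m') ⊆ A(n, m), and such that A(n, m) = ∅ unless n < m. Let φ : (0,1) → ℕ and define Φ(λ, g) := g̃^(φ(λ))(0) where g̃(n) := n + g(n). Then: (1) Φ is a uniform metastable rate (for all λ ∈ (0,1) and g : ℕ → ℕ there exists n ≤ Φ(λ, g) with P(A(n, n+g(n))) < λ) if and only if φ is a uniform learnable rate (for all λ ∈ (0,1) and all naturals a_0 < b_0 ≤ a_1 < b_1 ≤ … there exists n ≤ φ(λ) with P(A(a_n, b_n)) < λ); and (2) Φ is a pointwise metastable rate (for all λ and g, P(⋂_{n ≤ Φ(λ,g)} A(n, n+g(n))) < λ) if and only if φ is a pointwise learnable rate (for all λ and all naturals a_0 < b_0 ≤ a_1 < b_1 ≤ …, P(⋂_{n ≤ φ(λ)} A(a_n,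 b_n)) < λ). -/
open MeasureTheory

/-- For a monotone family of events `A n m` (empty unless `n < m`) and `φ : (0,1) → ℕ`, the
functional `Φ(λ, g) := g̃^[φ λ] 0` (where `g̃ n = n + g n`) is a uniform (resp. pointwise)
metastable rate if and only if `φ` is a uniform (resp. pointwise) learnable rate. -/
theorem stmt6 {Ω : Type} [MeasurableSpace Ω] (μ : Measure Ω) [IsProbabilityMeasure μ]
    (A : ℕ → ℕ → Set Ω) (hA : ∀ n m, MeasurableSet (A n m))
    (hmono : ∀ n n' m m' : ℕ, n ≤ n' → m' ≤ m → A n' m' ⊆ A n m)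
    (hempty : ∀ n m : ℕ, ¬ n < m → A n m = ∅)
    (φ : ℝ → ℕ) :
    ((∀ lam ∈ Set.Ioo (0 : ℝ) 1, ∀ g : ℕ → ℕ,
        ∃ n ≤ (fun m => m + g m)^[φ lam] 0, μ (A n (n + g n)) < ENNReal.ofReal lam) ↔
      (∀ lam ∈ Set.Ioo (0 : ℝ) 1, ∀ a b : ℕ → ℕ,
        (∀ n, a n < b n) → (∀ n, b n ≤ a (n + 1)) →
        ∃ n ≤ φ lam, μ (A (a n) (b n)) < ENNReal.ofReal lam)) ∧
    ((∀ lam ∈ Set.Ioo (0 : ℝ) 1, ∀ g : ℕ → ℕ,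
        μ (⋂ n ≤ (fun m => m + g m)^[φ lam] 0, A n (n + g n)) < ENNReal.ofReal lam) ↔
      (∀ lam ∈ Set.Ioo (0 : ℝ) 1, ∀ a b : ℕ → ℕ,
        (∀ n, a n < b n) → (∀ n, b n ≤ a (n + 1)) →
        μ (⋂ n ≤ φ lam, A (a n) (b n)) < ENNReal.ofReal lam)) := by
  -- Forward construction: from a learnable sequence (a,b) produce a function g
  have fwd : ∀ (a b : ℕ → ℕ), (∀ n, a n < b n) → (∀ n, b n ≤ a (n + 1)) →
      ∃ g : ℕ → ℕ, ∀ k : ℕ, ∀ n ≤ (fun m => m + g m)^[k] 0,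
        ∃ j ≤ k, A (a j) (b j) ⊆ A n (n + g n) := by
    intro a b ha hab
    have hamono : ∀ n, a n < a (n + 1) := fun n => lt_of_lt_of_le (ha n) (hab n)
    have hbmono : Monotone b :=
      monotone_nat_of_le_succ fun n => le_of_lt (lt_of_le_of_lt (hab n) (ha (n + 1)))
    have haself : ∀ m, m ≤ a m := by
      intro m
      induction m with
      | zero => exact Nat.zero_le _
      | succ n ih => exact Nat.succ_le_of_lt (lt_of_le_of_lt ih (hamono n))
    have hex : ∀ m : ℕ, ∃ k, m ≤ a k := fun m => ⟨m, haself m⟩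
    refine ⟨fun m => b (Nat.find (hex m)) - m, ?_⟩
    set K : ℕ → ℕ := fun m => Nat.find (hex m) with hKdef
    set g : ℕ → ℕ := fun m => b (K m) - m with hgdef
    have hK1 : ∀ m, m ≤ a (K m) := fun m => Nat.find_spec (hex m)
    have hadd : ∀ m, m + g m = b (K m) := by
      intro m
      have : m ≤ b (K m) := le_of_lt (lt_of_le_of_lt (hK1 m) (ha _))
      simp only [hgdef]
      omega
    have hKle : ∀ m i, m ≤ a i → K m ≤ i := fun m i h => Nat.find_min' (hex m) h
    have hiter : ∀ i, (fun m => m + g m)^[i] 0 ≤ a i := by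
      intro i
      induction i with
      | zero => exact Nat.zero_le _
      | succ i ih =>
        rw [Function.iterate_succ_apply']
        set x := (fun m => m + g m)^[i] 0
        show x + g x ≤ a (i + 1)
        calc x + g x = b (K x) := hadd x
          _ ≤ b i := hbmono (hKle x i ih)
          _ ≤ a (i + 1) := hab i
    intro k n hn
    refine ⟨K n, hKle n k (le_trans hn (hiter k)), ?_⟩
    exact hmono n (a (K n)) (n + g n) (b (K n)) (hK1 n) (le_of_eq (hadd n).symm)
  -- Backward construction: from g produce either a zero point or a learnable sequence
  have bwd : ∀ (k : ℕ) (g : ℕ → ℕ),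
      (∃ n ≤ (fun m => m + g m)^[k] 0, g n = 0) ∨
      ∃ a b : ℕ → ℕ, (∀ n, a n < b n) ∧ (∀ n, b n ≤ a (n + 1)) ∧
        ∀ j ≤ k, a j ≤ (fun m => m + g m)^[k] 0 ∧ b j = a j + g (a j) := by
    intro k g
    by_cases h0 : ∃ n ≤ (fun m => m + g m)^[k] 0, g n = 0
    · exact Or.inl h0
    · right
      push_neg at h0
      have hpos : ∀ n ≤ (fun m => m + g m)^[k] 0, 1 ≤ g n := by
        intro n hn
        exact Nat.one_le_iff_ne_zero.mpr (h0 n hn)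
      set g' : ℕ → ℕ := fun m => max 1 (g m) with hg'def
      set a : ℕ → ℕ := fun i => (fun m => m + g' m)^[i] 0 with hadef
      have hstep : ∀ i, a (i + 1) = a i + g' (a i) := by
        intro i
        simp only [hadef, Function.iterate_succ_apply']
      have haub : ∀ n, a n < a (n + 1) := by
        intro n
        rw [hstep n]
        have : 1 ≤ g' (a n) := le_max_left _ _
        omega
      have hGmono : Monotone (fun i => (fun m => m + g m)^[i] 0) := by
        apply monotone_nat_of_le_succ
        intro i
        rw [Function.iterate_succ_apply']
        exact Nat.le_add_right _ _
      have heq : ∀ i ≤ k, a i = (fun m => m + g m)^[i] 0 := by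
        intro i
        induction i with
        | zero => intro _; rfl
        | succ i ih =>
          intro hik
          have hik' : i ≤ k := Nat.le_of_succ_le hik
          have hx : (fun m => m + g m)^[i] 0 ≤ (fun m => m + g m)^[k] 0 :=
            hGmono hik'
          have hg1 : 1 ≤ g ((fun m => m + g m)^[i] 0) := hpos _ hx
          rw [hstep i, ih hik', Function.iterate_succ_apply']
          simp only [hg'def]
          omega
      refine ⟨a, fun i => a (i + 1), haub, fun n => le_refl _, ?_⟩
      intro j hj
      have h1 : a j = (fun m => m + g m)^[j] 0 := heq j hj
      have h2 : a j ≤ (fun m => m + g m)^[k] 0 := h1 ▸ hGmono hj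
      have hg1 : 1 ≤ g (a j) := hpos _ h2
      refine ⟨h2, ?_⟩
      show a (j + 1) = a j + g (a j)
      rw [hstep j]
      simp only [hg'def]
      omega
  have hlampos : ∀ lam ∈ Set.Ioo (0 : ℝ) 1, (0 : ENNReal) < ENNReal.ofReal lam := by
    intro lam hlam
    exact ENNReal.ofReal_pos.mpr hlam.1
  constructor
  · constructor
    · -- uniform metastable → uniform learnable
      intro hmeta lam hlam a b ha hab
      obtain ⟨g, hg⟩ := fwd a b ha hab
      obtain ⟨n, hn, hμ⟩ := hmeta lam hlam g
      obtain ⟨j, hj, hsub⟩ := hg (φ lam) n hn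
      exact ⟨j, hj, lt_of_le_of_lt (measure_mono hsub) hμ⟩
    · -- uniform learnable → uniform metastable
      intro hlearn lam hlam g
      rcases bwd (φ lam) g with ⟨n, hn, hg0⟩ | ⟨a, b, ha, hab, hk⟩
      · refine ⟨n, hn, ?_⟩
        rw [hg0, hempty n (n + 0) (by omega)]
        simpa using hlampos lam hlam
      · obtain ⟨j, hj, hμ⟩ := hlearn lam hlam a b ha hab
        obtain ⟨hle, hbe⟩ := hk j hj
        exact ⟨a j, hle, by rwa [← hbe]⟩
  · constructor
    · -- pointwise metastable → pointwise learnable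
      intro hmeta lam hlam a b ha hab
      obtain ⟨g, hg⟩ := fwd a b ha hab
      refine lt_of_le_of_lt (measure_mono ?_) (hmeta lam hlam g)
      intro x hx
      simp only [Set.mem_iInter] at hx ⊢
      intro n hn
      obtain ⟨j, hj, hsub⟩ := hg (φ lam) n hn
      exact hsub (hx j hj)
    · -- pointwise learnable → pointwise metastable
      intro hlearn lam hlam g
      rcases bwd (φ lam) g with ⟨n, hn, hg0⟩ | ⟨a, b, ha, hab, hk⟩
      · have hsub : (⋂ m ≤ (fun m => m + g m)^[φ lam] 0, A m (m + g m)) ⊆ A n (n + g n) := by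
          intro x hx
          simp only [Set.mem_iInter] at hx
          exact hx n hn
        have : (⋂ m ≤ (fun m => m + g m)^[φ lam] 0, A m (m + g m)) ⊆ (∅ : Set Ω) := by
          rw [hg0, hempty n (n + 0) (by omega)] at hsub
          exact hsub
        calc μ (⋂ m ≤ (fun m => m + g m)^[φ lam] 0, A m (m + g m))
            ≤ μ (∅ : Set Ω) := measure_mono this
          _ = 0 := measure_empty
          _ < ENNReal.ofReal lam := hlampos lam hlam
      · refine lt_of_le_of_lt (measure_mono ?_) (hlearn lam hlam a b ha hab)
        intro x hx
        simp only [Set.mem_iInter] at hx ⊢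
        intro j hj
        obtain ⟨hle, hbe⟩ := hk j hj
        rw [hbe]
        exact hx (a j) hle
end

section
/- Let (Ω, F, P) be a probability space and A : ℕ × ℕ → F a monotone family of measurable events (n ≤ n' and m' ≤ m imply A(n', m') ⊆ A(n, m)) with A(n, m) = ∅ unless n < m. If K > 0 satisfies E[J_{∞,A}] < K, then φ(λ) := ⌈K/λ⌉ is a uniform learnable rate: for all λ ∈ (0,1) and all naturals a_0 < b_0 ≤ a_1 < b_1 ≤ …, there exists n ≤ ⌈K/λ⌉ with P(A(a_n, b_n)) < λ. -/
/-!
At every `ω`, the indices `n` with `ω ∈ A (a n) (b n)` form an interleaved chain, so the number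
of events `A (a n) (b n)`, `n ≤ N`, containing `ω` is at most `J_∞(ω)`. Integrating,
`∑_{n ≤ N} P(A (a n) (b n)) ≤ E[J_∞] < K ≤ ⌈K/λ⌉ λ`, so for `N = ⌈K/λ⌉` not all `N + 1`
probabilities can be at least `λ`.
-/

open MeasureTheory ENNReal

/-- `ω` witnesses `k` many "abstract fluctuations" for the family `A`: there are naturals
`a₀ < b₀ ≤ a₁ < b₁ ≤ … ≤ a_{k-1} < b_{k-1}` with `ω ∈ A (a n) (b n)` for all `n < k`. -/
def HasJ {Ω : Type} (A : ℕ → ℕ → Set Ω) (k : ℕ) (ω : Ω) : Prop :=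
  ∃ a b : ℕ → ℕ, (∀ n < k, a n < b n) ∧ (∀ n, n + 1 < k → b n ≤ a (n + 1)) ∧
    ∀ n < k, ω ∈ A (a n) (b n)

/-- The random variable `J_{∞,A}` (with values in `ℝ≥0∞`): the supremum of all `k`
admitting `k` many abstract fluctuations for `A`. -/
noncomputable def JInf {Ω : Type} (A : ℕ → ℕ → Set Ω) (ω : Ω) : ℝ≥0∞ :=
  ⨆ k ∈ {k : ℕ | HasJ A k ω}, (k : ℝ≥0∞)

section Fluctuations

variable {Ω : Type} (A : ℕ → ℕ → Set Ω) {a b : ℕ → ℕ}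

lemma hasJ_card_of_forall_mem (hab : ∀ n, a n < b n) (hba : ∀ n, b n ≤ a (n + 1))
    {ω : Ω} (S : Finset ℕ) (hS : ∀ n ∈ S, ω ∈ A (a n) (b n)) :
    HasJ A S.card ω := by
  have ha : Monotone a :=
    (strictMono_nat_of_lt_succ fun n => (hab n).trans_le (hba n)).monotone
  let e := S.orderEmbOfFin rfl
  let i : ℕ → ℕ := fun n => if h : n < S.card then e ⟨n, h⟩ else 0
  refine ⟨a ∘ i, b ∘ i, fun n _ => hab _, fun n hn => ?_, fun n hn => ?_⟩
  · have hn' : n < S.card := n.lt_succ_self.trans hn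
    have hlt : e ⟨n, hn'⟩ < e ⟨n + 1, hn⟩ := e.strictMono (Fin.mk_lt_mk.mpr n.lt_succ_self)
    simp only [Function.comp_apply, i, dif_pos hn, dif_pos hn']
    exact (hba _).trans (ha hlt)
  · simp only [Function.comp_apply, i, dif_pos hn]
    exact hS _ (S.orderEmbOfFin_mem rfl _)

lemma natCast_le_jInf {k : ℕ} {ω : Ω} (h : HasJ A k ω) : (k : ℝ≥0∞) ≤ JInf A ω :=
  le_iSup₂ (f := fun (k : ℕ) (_ : k ∈ {k : ℕ | HasJ A k ω}) => (k : ℝ≥0∞)) k h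

lemma sum_indicator_le_jInf (hab : ∀ n, a n < b n) (hba : ∀ n, b n ≤ a (n + 1))
    (s : Finset ℕ) (ω : Ω) :
    ∑ n ∈ s, (A (a n) (b n)).indicator 1 ω ≤ JInf A ω := by
  classical
  have hcount : ∑ n ∈ s, (A (a n) (b n)).indicator (1 : Ω → ℝ≥0∞) ω
      = ((s.filter fun n => ω ∈ A (a n) (b n)).card : ℝ≥0∞) := by
    simp only [Set.indicator_apply, Pi.one_apply, Finset.sum_boole]
  rw [hcount]
  exact natCast_le_jInf A <|
    hasJ_card_of_forall_mem A hab hba _ fun n hn => (Finset.mem_filter.mp hn).2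

lemma sum_measure_le_lintegral_jInf [MeasurableSpace Ω] (μ : Measure Ω)
    (hA : ∀ n m, MeasurableSet (A n m)) (hab : ∀ n, a n < b n) (hba : ∀ n, b n ≤ a (n + 1))
    (s : Finset ℕ) :
    ∑ n ∈ s, μ (A (a n) (b n)) ≤ ∫⁻ ω, JInf A ω ∂μ :=
  calc ∑ n ∈ s, μ (A (a n) (b n))
      = ∫⁻ ω, ∑ n ∈ s, (A (a n) (b n)).indicator 1 ω ∂μ := by
        rw [lintegral_finsetSum _ fun n _ => measurable_one.indicator (hA _ _)]
        simp only [lintegral_indicator_one (hA _ _)]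
    _ ≤ ∫⁻ ω, JInf A ω ∂μ := lintegral_mono (sum_indicator_le_jInf A hab hba s)

end Fluctuations

lemma ofReal_le_ceil_div_mul_ofReal {K lam : ℝ} (hlam : 0 < lam) :
    ENNReal.ofReal K ≤ ⌈K / lam⌉₊ * ENNReal.ofReal lam := by
  rw [← ENNReal.ofReal_natCast, ← ENNReal.ofReal_mul (Nat.cast_nonneg _)]
  exact ENNReal.ofReal_le_ofReal ((div_le_iff₀ hlam).mp (Nat.le_ceil _))

theorem stmt8_general {Ω : Type} [MeasurableSpace Ω] (μ : Measure Ω)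
    (A : ℕ → ℕ → Set Ω) (hA : ∀ n m, MeasurableSet (A n m))
    (K : ℝ)
    (hE : ∫⁻ ω, JInf A ω ∂μ < ENNReal.ofReal K) :
    ∀ lam ∈ Set.Ioo (0 : ℝ) 1, ∀ a b : ℕ → ℕ,
      (∀ n, a n < b n) → (∀ n, b n ≤ a (n + 1)) →
      ∃ n ≤ ⌈K / lam⌉₊, μ (A (a n) (b n)) < ENNReal.ofReal lam := by
  intro lam hlam a b hab hba
  set N := ⌈K / lam⌉₊
  have hsum : ∑ n ∈ Finset.range (N + 1), μ (A (a n) (b n))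
      < ∑ _n ∈ Finset.range (N + 1), ENNReal.ofReal lam :=
    calc ∑ n ∈ Finset.range (N + 1), μ (A (a n) (b n))
        ≤ ∫⁻ ω, JInf A ω ∂μ := sum_measure_le_lintegral_jInf A μ hA hab hba _
      _ < ENNReal.ofReal K := hE
      _ ≤ N * ENNReal.ofReal lam := ofReal_le_ceil_div_mul_ofReal hlam.1
      _ ≤ ∑ _n ∈ Finset.range (N + 1), ENNReal.ofReal lam := by
        rw [Finset.sum_const, Finset.card_range, nsmul_eq_mul]
        gcongr
        exact_mod_cast N.le_succ
  obtain ⟨n, hn, hlt⟩ := Finset.exists_lt_of_sum_lt hsum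
  exact ⟨n, Nat.lt_succ_iff.mp (Finset.mem_range.mp hn), hlt⟩

/-- If `K > 0` satisfies `E[J_{∞,A}] < K`, then `φ(λ) := ⌈K/λ⌉` is a uniform learnable rate:
for all `λ ∈ (0,1)` and all `a₀ < b₀ ≤ a₁ < b₁ ≤ …`, there is `n ≤ ⌈K/λ⌉` with
`P(A (a n) (b n)) < λ`. -/
theorem stmt8 {Ω : Type} [MeasurableSpace Ω] (μ : Measure Ω) [IsProbabilityMeasure μ]
    (A : ℕ → ℕ → Set Ω) (hA : ∀ n m, MeasurableSet (A n m))
    (hmono : ∀ n n' m m' : ℕ, n ≤ n' → m' ≤ m → A n' m' ⊆ A n m)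
    (hempty : ∀ n m : ℕ, ¬ n < m → A n m = ∅)
    (K : ℝ) (hK : 0 < K)
    (hE : ∫⁻ ω, JInf A ω ∂μ < ENNReal.ofReal K) :
    ∀ lam ∈ Set.Ioo (0 : ℝ) 1, ∀ a b : ℕ → ℕ,
      (∀ n, a n < b n) → (∀ n, b n ≤ a (n + 1)) →
      ∃ n ≤ ⌈K / lam⌉₊, μ (A (a n) (b n)) < ENNReal.ofReal lam :=
  stmt8_general μ A hA K hE
end

section
/- Let (X_n) be a stochastic process on a probability space (Ω, F, P) and let φ : (0,1) × (0,1) → ℝ satisfy P(Fluc_∞(ε, X) ≥ φ(λ, ε)) < λ for all λ, ε ∈ (0,1) (a modulus of finite fluctuations). Then φ is a learnable rate of pointwise convergence for (X_n): for all λ, ε ∈ (0,1) and all naturals a_0 < b_0 ≤ a_1 < b_1 ≤ …, P(∀ n ≤ φ(λ, ε), ∃ i, j ∈ [a_n, b_n] with |X_i − X_j| ≥ ε) < λ. -/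
open MeasureTheory ENNReal

/-- `Fluc_∞(ε, x)`, the total number of ε-fluctuations of `x`, as a value in `ℝ≥0∞`. -/
noncomputable def flucInf (ε : ℝ) (x : ℕ → ℝ) : ℝ≥0∞ :=
  ⨆ k ∈ {k : ℕ | HasFluc ε x k}, (k : ℝ≥0∞)

/-! If every block `[a n, b n]` with `n ≤ φ` contains an ε-fluctuation, these `⌊φ⌋ + 1`
fluctuations sit in consecutive non-overlapping blocks, so `Fluc_∞(ε, X) ≥ φ` pathwise. The event
is therefore contained in `{Fluc_∞(ε, X) ≥ φ(λ, ε)}`, whose measure is `< λ`. -/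

theorem HasFluc.natCast_le_flucInf {ε : ℝ} {x : ℕ → ℝ} {k : ℕ} (h : HasFluc ε x k) :
    (k : ℝ≥0∞) ≤ flucInf ε x :=
  le_iSup₂ (f := fun k (_ : k ∈ {k | HasFluc ε x k}) => (k : ℝ≥0∞)) k h

theorem exists_lt_mem_Icc_of_le_abs_sub {ε : ℝ} (hε : 0 < ε) {x : ℕ → ℝ} {A B i j : ℕ}
    (hi : i ∈ Set.Icc A B) (hj : j ∈ Set.Icc A B) (hij : ε ≤ |x i - x j|) :
    ∃ p : ℕ × ℕ, A ≤ p.1 ∧ p.1 < p.2 ∧ p.2 ≤ B ∧ ε ≤ |x p.1 - x p.2| := by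
  rcases lt_trichotomy i j with h | rfl | h
  · exact ⟨(i, j), hi.1, h, hj.2, hij⟩
  · simp only [sub_self, abs_zero] at hij
    exact absurd hij hε.not_ge
  · exact ⟨(j, i), hj.1, h, hi.2, by rwa [abs_sub_comm]⟩

theorem hasFluc_of_forall_lt_exists_mem_Icc {ε : ℝ} (hε : 0 < ε) {x : ℕ → ℝ} {a b : ℕ → ℕ}
    (hba : ∀ n, b n ≤ a (n + 1)) {k : ℕ}
    (h : ∀ n < k, ∃ i ∈ Set.Icc (a n) (b n), ∃ j ∈ Set.Icc (a n) (b n), ε ≤ |x i - x j|) :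
    HasFluc ε x k := by
  have hsel : ∀ n, ∃ p : ℕ × ℕ, n < k →
      a n ≤ p.1 ∧ p.1 < p.2 ∧ p.2 ≤ b n ∧ ε ≤ |x p.1 - x p.2| := by
    intro n
    by_cases hn : n < k
    · obtain ⟨i, hi, j, hj, hij⟩ := h n hn
      obtain ⟨p, hp⟩ := exists_lt_mem_Icc_of_le_abs_sub hε hi hj hij
      exact ⟨p, fun _ => hp⟩
    · exact ⟨(0, 0), fun h => absurd h hn⟩
  choose p hp using hsel
  refine ⟨fun l => (p l).1, fun l => (p l).2, fun l hl => (hp l hl).2.1, fun l hl => ?_,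
    fun l hl => (hp l hl).2.2.2⟩
  calc (p l).2 ≤ b l := (hp l (Nat.lt_of_succ_lt hl)).2.2.1
    _ ≤ a (l + 1) := hba l
    _ ≤ (p (l + 1)).1 := (hp (l + 1) hl).1

theorem ofReal_le_flucInf_of_forall_le_exists_mem_Icc {ε c : ℝ} (hε : 0 < ε) {x : ℕ → ℝ}
    {a b : ℕ → ℕ} (hba : ∀ n, b n ≤ a (n + 1))
    (h : ∀ n : ℕ, (n : ℝ) ≤ c →
      ∃ i ∈ Set.Icc (a n) (b n), ∃ j ∈ Set.Icc (a n) (b n), ε ≤ |x i - x j|) :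
    ENNReal.ofReal c ≤ flucInf ε x := by
  rcases le_or_gt c 0 with hc | hc
  · simp [ENNReal.ofReal_eq_zero.2 hc]
  have hfluc : HasFluc ε x (⌊c⌋₊ + 1) :=
    hasFluc_of_forall_lt_exists_mem_Icc hε hba fun n hn =>
      h n ((Nat.cast_le.2 (Nat.lt_succ_iff.mp hn)).trans (Nat.floor_le hc.le))
  calc ENNReal.ofReal c ≤ ENNReal.ofReal (⌊c⌋₊ + 1 : ℕ) := by
        gcongr; push_cast; exact (Nat.lt_floor_add_one c).le
    _ = (⌊c⌋₊ + 1 : ℕ) := ENNReal.ofReal_natCast _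
    _ ≤ flucInf ε x := hfluc.natCast_le_flucInf

theorem stmt9_general {Ω : Type} [MeasurableSpace Ω] (μ : Measure Ω)
    (X : ℕ → Ω → ℝ)
    (φ : ℝ → ℝ → ℝ)
    (hφ : ∀ lam ∈ Set.Ioo (0 : ℝ) 1, ∀ eps ∈ Set.Ioo (0 : ℝ) 1,
      μ {ω | ENNReal.ofReal (φ lam eps) ≤ flucInf eps fun n => X n ω} < ENNReal.ofReal lam) :
    ∀ lam ∈ Set.Ioo (0 : ℝ) 1, ∀ eps ∈ Set.Ioo (0 : ℝ) 1, ∀ a b : ℕ → ℕ,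
      (∀ n, a n < b n) → (∀ n, b n ≤ a (n + 1)) →
      μ {ω | ∀ n : ℕ, (n : ℝ) ≤ φ lam eps →
          ∃ i ∈ Set.Icc (a n) (b n), ∃ j ∈ Set.Icc (a n) (b n), eps ≤ |X i ω - X j ω|}
        < ENNReal.ofReal lam := by
  intro lam hlam eps heps a b _ hba
  refine lt_of_le_of_lt (measure_mono fun ω hω => ?_) (hφ lam hlam eps heps)
  exact ofReal_le_flucInf_of_forall_le_exists_mem_Icc heps.1 hba hω

/-- If `φ` is a modulus of finite fluctuations for the process `X`
(`P(Fluc_∞(ε, X) ≥ φ(λ, ε)) < λ` for all `λ, ε ∈ (0,1)`), then `φ` is a learnable rate of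
pointwise convergence: for all `λ, ε ∈ (0,1)` and all `a₀ < b₀ ≤ a₁ < b₁ ≤ …`,
`P(∀ n ≤ φ(λ,ε), ∃ i, j ∈ [a n, b n], |X i - X j| ≥ ε) < λ`. -/
theorem stmt9 {Ω : Type} [MeasurableSpace Ω] (μ : Measure Ω) [IsProbabilityMeasure μ]
    (X : ℕ → Ω → ℝ) (hX : ∀ n, Measurable (X n))
    (φ : ℝ → ℝ → ℝ)
    (hφ : ∀ lam ∈ Set.Ioo (0 : ℝ) 1, ∀ eps ∈ Set.Ioo (0 : ℝ) 1,
      μ {ω | ENNReal.ofReal (φ lam eps) ≤ flucInf eps fun n => X n ω} < ENNReal.ofReal lam) :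
    ∀ lam ∈ Set.Ioo (0 : ℝ) 1, ∀ eps ∈ Set.Ioo (0 : ℝ) 1, ∀ a b : ℕ → ℕ,
      (∀ n, a n < b n) → (∀ n, b n ≤ a (n + 1)) →
      μ {ω | ∀ n : ℕ, (n : ℝ) ≤ φ lam eps →
          ∃ i ∈ Set.Icc (a n) (b n), ∃ j ∈ Set.Icc (a n) (b n), eps ≤ |X i ω - X j ω|}
        < ENNReal.ofReal lam :=
  stmt9_general μ X φ hφ
end

section
/- Let (X_n) be a stochastic process on a probability space (Ω, F, P). Suppose φ : (0,1) × (0,∞) × ℕ → ℝ is a modulus of finite crossings for (X_n) (i.e., P(∃ [α,β] ∈ P(M,l) with Cr_∞([α,β], X) ≥ φ(λ, M, l)) < λ for all λ ∈ (0,1), M > 0, l ∈ ℕ), and f : (0,1) → ℝ is a modulus of uniform boundedness for (X_n) (i.e., P(sup_{n∈ℕ} |X_n| ≥ f(λ)) < λ for all λ ∈ (0,1)). Then ψ(λ, ε) := l · φ(λ/2, M, l), where M := f(λ/2) and l := ⌈4M/ε⌉, is a modulus of finite fluctuations for (X_n): P(Fluc_∞(ε, X) ≥ ψ(λ, ε))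 < λ for all λ, ε ∈ (0,1). -/
/-!
On the event `sup_n |X_n| < M`, cut `[-M, M]` into `l ≥ 4M/ε` cells of width `2M/l ≤ ε/2`.
An `ε`-fluctuation of a sequence with values in `(-M, M)` spans at least two cell widths, so it
crosses some whole cell; by pigeonhole, `l · c` fluctuations force `c` crossings of one cell.
Hence the fluctuation event lies in the union of the crossing event and the unboundedness event,
each of probability `< λ/2`.
-/

open MeasureTheory ENNReal

/-- `Cr_∞([α,β], x)`, the total number of `[α,β]`-crossings of `x`, as a value in `ℝ≥0∞`. -/
noncomputable def crossInf (α β : ℝ) (x : ℕ → ℝ) : ℝ≥0∞ :=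
  ⨆ k ∈ {k : ℕ | HasCross α β x k}, (k : ℝ≥0∞)

lemma HasFluc.zero (ε : ℝ) (x : ℕ → ℝ) : HasFluc ε x 0 :=
  ⟨id, id, by simp, by simp, by simp⟩

lemma HasFluc.mono {ε : ℝ} {x : ℕ → ℝ} {k k' : ℕ} (h : HasFluc ε x k) (hk : k' ≤ k) :
    HasFluc ε x k' := by
  obtain ⟨i, j, hij, hji, hfluc⟩ := h
  exact ⟨i, j, fun l hl => hij l (hl.trans_le hk), fun l hl => hji l (hl.trans_le hk),
    fun l hl => hfluc l (hl.trans_le hk)⟩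

lemma hasFluc_ceil_of_ofReal_le_flucInf {ε r : ℝ} {x : ℕ → ℝ}
    (h : ENNReal.ofReal r ≤ flucInf ε x) : HasFluc ε x ⌈r⌉₊ := by
  by_contra hne
  have hbound : flucInf ε x ≤ ((⌈r⌉₊ - 1 : ℕ) : ℝ≥0∞) := by
    refine iSup₂_le fun k hk => ?_
    have : k < ⌈r⌉₊ := lt_of_not_ge fun hle => hne (HasFluc.mono hk hle)
    exact_mod_cast Nat.le_sub_one_of_lt this
  have hceil : ⌈r⌉₊ ≤ ⌈r⌉₊ - 1 := Nat.ceil_le.2 (ENNReal.ofReal_le_natCast.1 (h.trans hbound))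
  have hzero : ⌈r⌉₊ = 0 := by omega
  exact hne (hzero ▸ HasFluc.zero ε x)

lemma le_of_interleaved {i j : ℕ → ℕ} {m : ℕ} (hij : ∀ t < m, i t < j t)
    (hji : ∀ t, t + 1 < m → j t ≤ i (t + 1)) {t t' : ℕ} (htt' : t < t') (ht' : t' < m) :
    j t ≤ i t' := by
  induction t', htt' using Nat.le_induction with
  | base => exact hji t ht'
  | succ n hn ih =>
    exact (ih (by omega)).trans ((hij n (by omega)).le.trans (hji n ht'))

lemma hasCross_card_of_subset_s11 {α β : ℝ} {x : ℕ → ℝ} {i j : ℕ → ℕ} {m : ℕ}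
    (hij : ∀ t < m, i t < j t) (hji : ∀ t, t + 1 < m → j t ≤ i (t + 1))
    {T : Finset ℕ} (hT : T ⊆ Finset.range m)
    (hcross : ∀ t ∈ T, (x (i t) ≤ α ∧ β ≤ x (j t)) ∨ (β ≤ x (i t) ∧ x (j t) ≤ α)) :
    HasCross α β x T.card := by
  set e : ℕ → ℕ := fun s => if h : s < T.card then T.orderEmbOfFin rfl ⟨s, h⟩ else 0
  have he_mem : ∀ s < T.card, e s ∈ T := fun s hs => by
    simp only [e, dif_pos hs]
    exact T.orderEmbOfFin_mem rfl _
  have he_lt : ∀ s < T.card, e s < m := fun s hs => Finset.mem_range.1 (hT (he_mem s hs))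
  have he_mono : ∀ s, s + 1 < T.card → e s < e (s + 1) := fun s hs => by
    simp only [e, dif_pos hs, dif_pos (Nat.lt_of_succ_lt hs)]
    exact (T.orderEmbOfFin rfl).strictMono (Fin.mk_lt_mk.2 (Nat.lt_succ_self s))
  exact ⟨i ∘ e, j ∘ e, fun s hs => hij _ (he_lt s hs),
    fun s hs => le_of_interleaved hij hji (he_mono s hs) (he_lt _ hs),
    fun s hs => hcross _ (he_mem s hs)⟩

lemma exists_cell_between {M a b : ℝ} {l : ℕ} (hM : 0 < M) (ha : -M < a) (hb : b < M)
    (hab : 4 * M ≤ l * (b - a)) :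
    ∃ i < l, a ≤ -M + 2 * M * (i : ℝ) / l ∧ -M + 2 * M * ((i : ℝ) + 1) / l ≤ b := by
  have hl : (0 : ℝ) < l := Nat.cast_pos.2 (Nat.pos_of_ne_zero fun h => by
    simp only [h, Nat.cast_zero, zero_mul] at hab; linarith)
  set w := 2 * M / l with hw
  have hw_pos : 0 < w := by positivity
  have hcell : ∀ y : ℝ, 2 * M * y / l = y * w := fun y => by rw [hw]; ring
  have hw_le : 2 * w ≤ b - a := by
    rw [hw, ← mul_div_assoc, div_le_iff₀ hl]; linarith
  -- the first partition point at or above `a`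
  set g := ⌈(a + M) / w⌉₊
  have hg_ge : (a + M) / w ≤ g := Nat.le_ceil _
  have hg_lt : (g : ℝ) < (a + M) / w + 1 :=
    Nat.ceil_lt_add_one (div_nonneg (by linarith) hw_pos.le)
  rw [div_le_iff₀ hw_pos] at hg_ge
  rw [← sub_lt_iff_lt_add, lt_div_iff₀ hw_pos] at hg_lt
  have hgl : (g : ℝ) + 1 < l := by
    have : ((g : ℝ) + 1) * w < l * w := by
      rw [show (l : ℝ) * w = 2 * M by rw [hw]; field_simp]; nlinarith
    exact lt_of_mul_lt_mul_right this hw_pos.le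
  refine ⟨g, by exact_mod_cast (lt_add_one (g : ℝ)).trans hgl, ?_, ?_⟩
  · rw [hcell]; linarith
  · rw [hcell]; nlinarith

lemma exists_cell_crossed {M ε x y : ℝ} {l : ℕ} (hx : |x| < M) (hy : |y| < M)
    (hxy : ε ≤ |x - y|) (hl : 4 * M ≤ l * ε) :
    ∃ i < l, (x ≤ -M + 2 * M * (i : ℝ) / l ∧ -M + 2 * M * ((i : ℝ) + 1) / l ≤ y) ∨
      (-M + 2 * M * ((i : ℝ) + 1) / l ≤ x ∧ y ≤ -M + 2 * M * (i : ℝ) / l) := by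
  have hM : 0 < M := (abs_nonneg x).trans_lt hx
  have hwidth : 4 * M ≤ l * |x - y| := hl.trans (by gcongr)
  rw [abs_lt] at hx hy
  rcases le_total x y with hle | hle
  · rw [abs_sub_comm, abs_of_nonneg (sub_nonneg.2 hle)] at hwidth
    obtain ⟨i, hi, hxi, hiy⟩ := exists_cell_between hM hx.1 hy.2 hwidth
    exact ⟨i, hi, Or.inl ⟨hxi, hiy⟩⟩
  · rw [abs_of_nonneg (sub_nonneg.2 hle)] at hwidth
    obtain ⟨i, hi, hyi, hix⟩ := exists_cell_between hM hy.1 hx.2 hwidth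
    exact ⟨i, hi, Or.inr ⟨hix, hyi⟩⟩

lemma exists_cell_le_crossInf {M ε c : ℝ} {l : ℕ} {x : ℕ → ℝ} (hx : ∀ n, |x n| < M)
    (hl : 4 * M ≤ l * ε) (hfluc : ENNReal.ofReal (l * c) ≤ flucInf ε x) :
    ∃ i < l, ENNReal.ofReal c ≤
      crossInf (-M + 2 * M * (i : ℝ) / l) (-M + 2 * M * ((i : ℝ) + 1) / l) x := by
  have hl_pos : 0 < l := Nat.pos_of_ne_zero fun h => by
    simp only [h, Nat.cast_zero, zero_mul] at hl; linarith [(abs_nonneg (x 0)).trans_lt (hx 0)]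
  obtain ⟨i, j, hij, hji, hε⟩ := hasFluc_ceil_of_ofReal_le_flucInf hfluc
  set m := ⌈(l : ℝ) * c⌉₊
  have hcell : ∀ t, ∃ k, t < m → k < l ∧
      ((x (i t) ≤ -M + 2 * M * (k : ℝ) / l ∧ -M + 2 * M * ((k : ℝ) + 1) / l ≤ x (j t)) ∨
        (-M + 2 * M * ((k : ℝ) + 1) / l ≤ x (i t) ∧ x (j t) ≤ -M + 2 * M * (k : ℝ) / l)) :=
    fun t => by
      by_cases ht : t < m
      · obtain ⟨k, hk⟩ := exists_cell_crossed (hx (i t)) (hx (j t)) (hε t ht) hl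
        exact ⟨k, fun _ => hk⟩
      · exact ⟨0, fun h => absurd h ht⟩
  choose g hg using hcell
  obtain ⟨k, hk, hck⟩ := Finset.exists_le_card_fiber_of_nsmul_le_card_of_maps_to
    (s := Finset.range m) (t := Finset.range l) (f := g) (b := c)
    (fun t ht => Finset.mem_range.2 (hg t (Finset.mem_range.1 ht)).1)
    ⟨0, Finset.mem_range.2 hl_pos⟩ (by simpa using Nat.le_ceil ((l : ℝ) * c))
  refine ⟨k, Finset.mem_range.1 hk, le_trans ?_ (le_biSup (fun n : ℕ => (n : ℝ≥0∞))
    (hasCross_card_of_subset_s11 hij hji (Finset.filter_subset (fun t => g t = k) _) ?_))⟩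
  · rw [← ENNReal.ofReal_natCast]
    exact ENNReal.ofReal_le_ofReal hck
  · intro t ht
    obtain ⟨htm, rfl⟩ := Finset.mem_filter.1 ht
    exact (hg t (Finset.mem_range.1 htm)).2

lemma pos_of_measure_setOf_ofReal_le_lt_one {Ω : Type*} [MeasurableSpace Ω] (μ : Measure Ω)
    [IsProbabilityMeasure μ] {M : ℝ} {g : Ω → ℝ≥0∞} (h : μ {ω | ENNReal.ofReal M ≤ g ω} < 1) :
    0 < M := by
  by_contra hM
  simp [ENNReal.ofReal_eq_zero.2 (not_lt.1 hM)] at h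

lemma abs_lt_of_iSup_ofReal_abs_lt {M : ℝ} {x : ℕ → ℝ}
    (h : ⨆ n, ENNReal.ofReal |x n| < ENNReal.ofReal M) (n : ℕ) : |x n| < M :=
  (ENNReal.ofReal_lt_ofReal_iff_of_nonneg (abs_nonneg _)).1 ((le_iSup _ n).trans_lt h)

theorem stmt11_general {Ω : Type} [MeasurableSpace Ω] (μ : Measure Ω) [IsProbabilityMeasure μ]
    (X : ℕ → Ω → ℝ)
    (φ : ℝ → ℝ → ℕ → ℝ)
    (hφ : ∀ lam ∈ Set.Ioo (0 : ℝ) 1, ∀ M : ℝ, 0 < M → ∀ l : ℕ,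
      μ {ω | ∃ i : ℕ, i < l ∧ ENNReal.ofReal (φ lam M l) ≤
          crossInf (-M + 2 * M * (i : ℝ) / (l : ℝ)) (-M + 2 * M * ((i : ℝ) + 1) / (l : ℝ))
            fun n => X n ω}
        < ENNReal.ofReal lam)
    (f : ℝ → ℝ)
    (hf : ∀ lam ∈ Set.Ioo (0 : ℝ) 1,
      μ {ω | ENNReal.ofReal (f lam) ≤ ⨆ n : ℕ, ENNReal.ofReal |X n ω|} < ENNReal.ofReal lam) :
    ∀ lam ∈ Set.Ioo (0 : ℝ) 1, ∀ eps ∈ Set.Ioo (0 : ℝ) 1, ∀ M : ℝ, ∀ l : ℕ,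
      M = f (lam / 2) → l = ⌈4 * M / eps⌉₊ →
      μ {ω | ENNReal.ofReal ((l : ℝ) * φ (lam / 2) M l) ≤ flucInf eps fun n => X n ω}
        < ENNReal.ofReal lam := by
  intro lam ⟨hlam0, hlam1⟩ eps ⟨heps, _⟩ M l hMf hl
  have hlam2 : lam / 2 ∈ Set.Ioo (0 : ℝ) 1 := ⟨by linarith, by linarith⟩
  have hunbdd := hf _ hlam2
  rw [← hMf] at hunbdd
  have hM : 0 < M := pos_of_measure_setOf_ofReal_le_lt_one μ
    (hunbdd.trans_le (ENNReal.ofReal_le_one.2 (by linarith)))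
  have hwidth : 4 * M ≤ l * eps := hl ▸ (div_le_iff₀ heps).1 (Nat.le_ceil _)
  calc _ ≤ μ ({ω | ∃ i : ℕ, i < l ∧ ENNReal.ofReal (φ (lam / 2) M l) ≤
          crossInf (-M + 2 * M * (i : ℝ) / l) (-M + 2 * M * ((i : ℝ) + 1) / l) fun n => X n ω} ∪
        {ω | ENNReal.ofReal M ≤ ⨆ n : ℕ, ENNReal.ofReal |X n ω|}) :=
        measure_mono fun ω hω => by
          by_cases hbdd : ENNReal.ofReal M ≤ ⨆ n : ℕ, ENNReal.ofReal |X n ω|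
          · exact Or.inr hbdd
          · exact Or.inl (exists_cell_le_crossInf
              (abs_lt_of_iSup_ofReal_abs_lt (not_le.1 hbdd)) hwidth hω)
    _ ≤ _ := measure_union_le _ _
    _ < ENNReal.ofReal (lam / 2) + ENNReal.ofReal (lam / 2) :=
        ENNReal.add_lt_add (hφ _ hlam2 M hM l) hunbdd
    _ = ENNReal.ofReal lam := by rw [← ENNReal.ofReal_add (by linarith) (by linarith), add_halves]

/-- If `φ` is a modulus of finite crossings for `X` (over all partitions `𝒫(M,l)` of `[-M,M]`
into `l` equal subintervals) and `f` is a modulus of uniform boundedness for `X`, then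
`ψ(λ, ε) := l · φ(λ/2, M, l)` with `M := f(λ/2)`, `l := ⌈4M/ε⌉` is a modulus of finite
fluctuations for `X`. -/
theorem stmt11 {Ω : Type} [MeasurableSpace Ω] (μ : Measure Ω) [IsProbabilityMeasure μ]
    (X : ℕ → Ω → ℝ) (hX : ∀ n, Measurable (X n))
    (φ : ℝ → ℝ → ℕ → ℝ)
    (hφ : ∀ lam ∈ Set.Ioo (0 : ℝ) 1, ∀ M : ℝ, 0 < M → ∀ l : ℕ,
      μ {ω | ∃ i : ℕ, i < l ∧ ENNReal.ofReal (φ lam M l) ≤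
          crossInf (-M + 2 * M * (i : ℝ) / (l : ℝ)) (-M + 2 * M * ((i : ℝ) + 1) / (l : ℝ))
            fun n => X n ω}
        < ENNReal.ofReal lam)
    (f : ℝ → ℝ)
    (hf : ∀ lam ∈ Set.Ioo (0 : ℝ) 1,
      μ {ω | ENNReal.ofReal (f lam) ≤ ⨆ n : ℕ, ENNReal.ofReal |X n ω|} < ENNReal.ofReal lam) :
    ∀ lam ∈ Set.Ioo (0 : ℝ) 1, ∀ eps ∈ Set.Ioo (0 : ℝ) 1, ∀ M : ℝ, ∀ l : ℕ,
      M = f (lam / 2) → l = ⌈4 * M / eps⌉₊ →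
      μ {ω | ENNReal.ofReal ((l : ℝ) * φ (lam / 2) M l) ≤ flucInf eps fun n => X n ω}
        < ENNReal.ofReal lam :=
  stmt11_general μ X φ hφ f hf
end

section
/- Let (X_n) be a stochastic process on a probability space (Ω, F, P) with a modulus of L1-crossings ψ (i.e., E[Cr_∞([α,β], X)] < ψ(M, l) for all M > 0, l ∈ ℕ and all [α,β] ∈ P(M,l)), and let M > 0, ε > 0. Define the events Q_M(ε, n, m) := {∃ l, k ∈ [n, m] with |X_l − X_k| ≥ ε} ∩ {|X_n| ≤ M}. Then for all naturals a_0 < b_0 ≤ a_1 < b_1 ≤ …, Σ_{i=0}^∞ P(Q_M(ε, a_i, b_i)) ≤ (p+2) · ψ(M(1 + 2/p), p+2), where p := ⌈8M/ε⌉. -/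
open MeasureTheory ENNReal

/-- If each block `[a i, b i]` indexed by a finite set `S` contains a crossing of `[α,β]`,
then there are at least `S.card` many crossings in total. -/
theorem count_cross (α β : ℝ) (x : ℕ → ℝ) (a b : ℕ → ℕ)
    (hab : ∀ n, a n ≤ b n) (hba : ∀ n, b n ≤ a (n + 1)) (S : Finset ℕ)
    (hS : ∀ i ∈ S, ∃ s t : ℕ, (a i ≤ s ∧ s < t ∧ t ≤ b i) ∧
      ((x s ≤ α ∧ β ≤ x t) ∨ (β ≤ x s ∧ x t ≤ α))) :
    HasCross α β x S.card := by
  have amono : Monotone a := monotone_nat_of_le_succ fun n => (hab n).trans (hba n)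
  set k := S.card with hk
  have hkk : S.card = k := hk.symm
  set e : Fin k → ℕ := fun m => S.orderEmbOfFin hkk m with he
  have hemem : ∀ m, e m ∈ S := fun m => Finset.orderEmbOfFin_mem S hkk m
  have hemono : StrictMono e := (S.orderEmbOfFin hkk).strictMono
  have H : ∀ m : Fin k, ∃ s t : ℕ, (a (e m) ≤ s ∧ s < t ∧ t ≤ b (e m)) ∧
      ((x s ≤ α ∧ β ≤ x t) ∨ (β ≤ x s ∧ x t ≤ α)) := fun m => hS _ (hemem m)
  choose s t hst hcr using H
  refine ⟨fun l => if h : l < k then s ⟨l, h⟩ else 0,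
    fun l => if h : l < k then t ⟨l, h⟩ else 0, ?_, ?_, ?_⟩
  · intro l hl
    simp only [dif_pos hl]
    exact (hst ⟨l, hl⟩).2.1
  · intro l hl
    have hl' : l < k := Nat.lt_of_succ_lt hl
    simp only [dif_pos hl, dif_pos hl']
    have h1 : t ⟨l, hl'⟩ ≤ b (e ⟨l, hl'⟩) := (hst _).2.2
    have h2 : b (e ⟨l, hl'⟩) ≤ a (e ⟨l, hl'⟩ + 1) := hba _
    have h3 : e ⟨l, hl'⟩ + 1 ≤ e ⟨l + 1, hl⟩ :=
      hemono (Fin.mk_lt_mk.mpr (Nat.lt_succ_self l))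
    have h4 : a (e ⟨l + 1, hl⟩) ≤ s ⟨l + 1, hl⟩ := (hst _).1
    exact h1.trans (h2.trans ((amono h3).trans h4))
  · intro l hl
    simp only [dif_pos hl]
    exact hcr ⟨l, hl⟩

/-- If `|u| ≤ M` and `|v - u| ≥ ε/2`, then some cell of the partition of
`[-M(1+2/p), M(1+2/p)]` into `p+2` pieces is crossed by the pair `(u, v)`. -/
theorem find_cell (M eps : ℝ) (hM : 0 < M) (heps : 0 < eps) (p : ℕ)
    (hp : 8 * M / eps ≤ (p : ℝ)) (u v : ℝ) (hu : |u| ≤ M) (huv : eps / 2 ≤ |v - u|) :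
    ∃ q : ℕ, q < p + 2 ∧
      ((u ≤ -(M * (1 + 2 / (p : ℝ))) + 2 * (M * (1 + 2 / (p : ℝ))) * (q : ℝ) / ((p : ℝ) + 2) ∧
        -(M * (1 + 2 / (p : ℝ))) + 2 * (M * (1 + 2 / (p : ℝ))) * ((q : ℝ) + 1) / ((p : ℝ) + 2) ≤ v)
      ∨ (-(M * (1 + 2 / (p : ℝ))) + 2 * (M * (1 + 2 / (p : ℝ))) * ((q : ℝ) + 1) / ((p : ℝ) + 2) ≤ u ∧
        v ≤ -(M * (1 + 2 / (p : ℝ))) + 2 * (M * (1 + 2 / (p : ℝ))) * (q : ℝ) / ((p : ℝ) + 2))) := by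
  have hppos : (0 : ℝ) < p := lt_of_lt_of_le (by positivity) hp
  have hp0 : (p : ℝ) ≠ 0 := hppos.ne'
  set c : ℝ := 2 * M / p with hc
  have hcpos : 0 < c := by rw [hc]; positivity
  have key : ∀ r : ℝ, -(M * (1 + 2 / (p : ℝ))) + 2 * (M * (1 + 2 / (p : ℝ))) * r / ((p : ℝ) + 2)
      = r * c - (M + c) := by
    intro r
    rw [hc]
    field_simp
    ring
  have hpc : (p : ℝ) * c = 2 * M := by rw [hc]; field_simp
  have hc4 : c ≤ eps / 4 := by
    rw [hc, div_le_div_iff₀ hppos (by norm_num)]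
    have h8 : 8 * M ≤ (p : ℝ) * eps := by rwa [div_le_iff₀ heps] at hp
    nlinarith
  have humem : -M ≤ u ∧ u ≤ M := abs_le.mp hu
  set x : ℝ := (u + (M + c)) / c with hx
  have hxc : x * c = u + (M + c) := by rw [hx]; field_simp
  have hx0 : 0 ≤ x := by
    apply div_nonneg _ hcpos.le
    linarith [humem.1]
  have hxle : x ≤ (p : ℝ) + 1 := by
    rw [hx, div_le_iff₀ hcpos]
    nlinarith [humem.2]
  simp only [key]
  rcases le_total u v with hcase | hcase
  · have hvu : eps / 2 ≤ v - u := by rwa [abs_of_nonneg (by linarith)] at huv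
    have hceil : x ≤ (⌈x⌉₊ : ℝ) := Nat.le_ceil x
    have hceil2 : (⌈x⌉₊ : ℝ) < x + 1 := Nat.ceil_lt_add_one hx0
    refine ⟨⌈x⌉₊, ?_, Or.inl ⟨?_, ?_⟩⟩
    · have : (⌈x⌉₊ : ℝ) < (p : ℝ) + 2 := by linarith
      exact_mod_cast this
    · nlinarith
    · nlinarith
  · have hvu : eps / 2 ≤ u - v := by rwa [abs_of_nonpos (by linarith), neg_sub] at huv
    have hx1 : 1 ≤ x := by
      rw [hx, le_div_iff₀ hcpos]
      nlinarith [humem.1]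
    have hf1 : 1 ≤ ⌊x⌋₊ := Nat.le_floor (by exact_mod_cast hx1)
    have hfle : (⌊x⌋₊ : ℝ) ≤ x := Nat.floor_le hx0
    have hflt : x < (⌊x⌋₊ : ℝ) + 1 := Nat.lt_floor_add_one x
    have hcast : ((⌊x⌋₊ - 1 : ℕ) : ℝ) = (⌊x⌋₊ : ℝ) - 1 := by
      rw [Nat.cast_sub hf1]; norm_num
    refine ⟨⌊x⌋₊ - 1, ?_, Or.inr ⟨?_, ?_⟩⟩
    · have : (⌊x⌋₊ : ℝ) ≤ (p : ℝ) + 1 := le_trans hfle hxle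
      have hfp : ⌊x⌋₊ ≤ p + 1 := by exact_mod_cast this
      omega
    · rw [hcast]; nlinarith
    · rw [hcast]; nlinarith

/-- If `ψ` is a modulus of `L₁`-crossings for `X` (`E[Cr_∞([α,β],X)] < ψ(M,l)` for every
subinterval `[α,β]` of the partition `𝒫(M,l)` of `[-M,M]`), then for any `M, ε > 0` the events
`Q_M(ε, n, m) = {∃ l, k ∈ [n,m], |X l - X k| ≥ ε} ∩ {|X n| ≤ M}` satisfy
`Σ_i P(Q_M(ε, a i, b i)) ≤ (p+2) ψ(M(1+2/p), p+2)` with `p = ⌈8M/ε⌉`, uniformly in the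
chain `a₀ < b₀ ≤ a₁ < b₁ ≤ …`. -/
theorem stmt12 {Ω : Type} [MeasurableSpace Ω] (μ : Measure Ω) [IsProbabilityMeasure μ]
    (X : ℕ → Ω → ℝ) (hX : ∀ n, Measurable (X n))
    (ψ : ℝ → ℕ → ℝ)
    (hψ : ∀ M : ℝ, 0 < M → ∀ l : ℕ, ∀ i : ℕ, i < l →
      ∫⁻ ω, crossInf (-M + 2 * M * (i : ℝ) / (l : ℝ)) (-M + 2 * M * ((i : ℝ) + 1) / (l : ℝ))
          (fun n => X n ω) ∂μ
        < ENNReal.ofReal (ψ M l))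
    (M eps : ℝ) (hM : 0 < M) (heps : 0 < eps)
    (p : ℕ) (hp : p = ⌈8 * M / eps⌉₊)
    (a b : ℕ → ℕ) (hab : ∀ n, a n < b n) (hba : ∀ n, b n ≤ a (n + 1)) :
    ∑' i : ℕ,
        μ {ω | (∃ l ∈ Set.Icc (a i) (b i), ∃ k ∈ Set.Icc (a i) (b i), eps ≤ |X l ω - X k ω|)
            ∧ |X (a i) ω| ≤ M}
      ≤ ENNReal.ofReal (((p : ℝ) + 2) * ψ (M * (1 + 2 / (p : ℝ))) (p + 2)) := by
  classical
  have hpR : 8 * M / eps ≤ (p : ℝ) := by rw [hp]; exact Nat.le_ceil _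
  have hM'pos : 0 < M * (1 + 2 / (p : ℝ)) := by
    have hppos : (0 : ℝ) < p := lt_of_lt_of_le (by positivity) hpR
    positivity
  set M' : ℝ := M * (1 + 2 / (p : ℝ)) with hM'def
  set αq : ℕ → ℝ := fun q => -M' + 2 * M' * (q : ℝ) / ((p : ℝ) + 2) with hαq
  set βq : ℕ → ℝ := fun q => -M' + 2 * M' * ((q : ℝ) + 1) / ((p : ℝ) + 2) with hβq
  set A : ℕ → ℕ → Set Ω := fun i q => ⋃ s, ⋃ t, ⋃ (_ : a i ≤ s ∧ s < t ∧ t ≤ b i),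
    {ω | (X s ω ≤ αq q ∧ βq q ≤ X t ω) ∨ (βq q ≤ X s ω ∧ X t ω ≤ αq q)} with hA
  have hmeasA : ∀ i q, MeasurableSet (A i q) := by
    intro i q
    rw [hA]
    refine MeasurableSet.iUnion fun s => MeasurableSet.iUnion fun t =>
      MeasurableSet.iUnion fun _ => ?_
    exact (((measurableSet_le (hX s) measurable_const).inter
        (measurableSet_le measurable_const (hX t))).union
      ((measurableSet_le measurable_const (hX s)).inter
        (measurableSet_le (hX t) measurable_const)))
  have hψ' : ∀ q < p + 2,
      ∫⁻ ω, crossInf (αq q) (βq q) (fun n => X n ω) ∂μ < ENNReal.ofReal (ψ M' (p + 2)) := by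
    intro q hq
    have hcast : (((p + 2 : ℕ)) : ℝ) = (p : ℝ) + 2 := by push_cast; ring
    have h := hψ M' hM'pos (p + 2) q hq
    rw [hcast] at h
    simpa only [hαq, hβq] using h
  have hsub : ∀ i,
      {ω | (∃ l ∈ Set.Icc (a i) (b i), ∃ k ∈ Set.Icc (a i) (b i), eps ≤ |X l ω - X k ω|)
          ∧ |X (a i) ω| ≤ M} ⊆ ⋃ q ∈ Finset.range (p + 2), A i q := by
    intro i ω hω
    obtain ⟨⟨l, hl, k, hk, hlk⟩, hub⟩ := hω
    have hm : ∃ m ∈ Set.Icc (a i) (b i), eps / 2 ≤ |X m ω - X (a i) ω| := by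
      rcases le_or_gt (eps / 2) |X l ω - X (a i) ω| with h | h
      · exact ⟨l, hl, h⟩
      · refine ⟨k, hk, ?_⟩
        have h1 := abs_sub_le (X l ω) (X (a i) ω) (X k ω)
        have h2 : |X (a i) ω - X k ω| = |X k ω - X (a i) ω| := abs_sub_comm _ _
        linarith
    obtain ⟨m, hmIcc, hmε⟩ := hm
    obtain ⟨q, hq, hcr⟩ := find_cell M eps hM heps p hpR (X (a i) ω) (X m ω) hub hmε
    have ham : a i < m := by
      rcases eq_or_lt_of_le hmIcc.1 with h | h
      · exfalso
        rw [← h, sub_self, abs_zero] at hmε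
        linarith
      · exact h
    refine Set.mem_biUnion (Finset.mem_range.mpr hq) ?_
    simp only [hA, Set.mem_iUnion, Set.mem_setOf_eq]
    refine ⟨a i, m, ⟨le_refl _, ham, hmIcc.2⟩, ?_⟩
    simpa only [hαq, hβq, hM'def] using hcr
  have hstep : ∀ q < p + 2, ∑' i, μ (A i q) ≤ ENNReal.ofReal (ψ M' (p + 2)) := by
    intro q hq
    have hpt : ∀ ω, ∑' i, (A i q).indicator (1 : Ω → ℝ≥0∞) ω
        ≤ crossInf (αq q) (βq q) (fun n => X n ω) := by
      intro ω
      rw [ENNReal.tsum_eq_iSup_sum]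
      apply iSup_le
      intro F
      have hcount : ∑ i ∈ F, (A i q).indicator (1 : Ω → ℝ≥0∞) ω
          = ((F.filter (fun i => ω ∈ A i q)).card : ℝ≥0∞) := by
        simp only [Set.indicator_apply, Pi.one_apply]
        rw [Finset.sum_boole]
      rw [hcount]
      have hcross : HasCross (αq q) (βq q) (fun n => X n ω)
          (F.filter (fun i => ω ∈ A i q)).card := by
        apply count_cross _ _ _ a b (fun n => (hab n).le) hba
        intro i hi
        have hmem : ω ∈ A i q := (Finset.mem_filter.mp hi).2
        simpa only [hA, Set.mem_iUnion, Set.mem_setOf_eq, exists_prop] using hmem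
      exact le_iSup₂ (f := fun (k : ℕ)
        (_ : k ∈ {k : ℕ | HasCross (αq q) (βq q) (fun n => X n ω) k}) => (k : ℝ≥0∞)) _ hcross
    calc ∑' i, μ (A i q)
        = ∑' i, ∫⁻ ω, (A i q).indicator (1 : Ω → ℝ≥0∞) ω ∂μ :=
          tsum_congr fun i => (lintegral_indicator_one (hmeasA i q)).symm
      _ = ∫⁻ ω, ∑' i, (A i q).indicator (1 : Ω → ℝ≥0∞) ω ∂μ :=
          (lintegral_tsum fun i => (measurable_one.indicator (hmeasA i q)).aemeasurable).symm
      _ ≤ ∫⁻ ω, crossInf (αq q) (βq q) (fun n => X n ω) ∂μ := lintegral_mono hpt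
      _ ≤ ENNReal.ofReal (ψ M' (p + 2)) := (hψ' q hq).le
  calc ∑' i : ℕ,
        μ {ω | (∃ l ∈ Set.Icc (a i) (b i), ∃ k ∈ Set.Icc (a i) (b i), eps ≤ |X l ω - X k ω|)
            ∧ |X (a i) ω| ≤ M}
      ≤ ∑' i : ℕ, ∑ q ∈ Finset.range (p + 2), μ (A i q) :=
        ENNReal.tsum_le_tsum fun i =>
          (measure_mono (hsub i)).trans (measure_biUnion_finset_le _ _)
    _ = ∑ q ∈ Finset.range (p + 2), ∑' i : ℕ, μ (A i q) :=
        Summable.tsum_finsetSum fun _ _ => ENNReal.summable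
    _ ≤ ∑ q ∈ Finset.range (p + 2), ENNReal.ofReal (ψ M' (p + 2)) :=
        Finset.sum_le_sum fun q hq => hstep q (Finset.mem_range.mp hq)
    _ = ((p + 2 : ℕ) : ℝ≥0∞) * ENNReal.ofReal (ψ M' (p + 2)) := by
        rw [Finset.sum_const, Finset.card_range, nsmul_eq_mul]
    _ = ENNReal.ofReal (((p : ℝ) + 2) * ψ M' (p + 2)) := by
        rw [ENNReal.ofReal_mul (by positivity : (0 : ℝ) ≤ (p : ℝ) + 2)]
        congr 1
        rw [show ((p : ℝ) + 2) = ((p + 2 : ℕ) : ℝ) by push_cast; ring, ENNReal.ofReal_natCast]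
end

section
/- Let (X_n) be a stochastic process on a probability space (Ω, F, P) and fix λ, ε > 0. Suppose M > 0 satisfies P(|X_n| ≥ M) < λ/2 for all n ∈ ℕ, and L > 0 satisfies E[Cr_∞([α,β], X)] ≤ L for all [α,β] ∈ P(M(1 + 2/p), p+2), where p := ⌈8M/ε⌉. Then for all naturals a_0 < b_0 ≤ a_1 < b_1 ≤ … there exists n ≤ 2(p+2)L/λ such that P(∃ k, l ∈ [a_n, b_n] with |X_k − X_l| ≥ ε) < λ. -/
open MeasureTheory ENNReal

/-!
Let `w = 2M/p` be the mesh of the partition; then `4w ≤ ε` and `±M` are partition points. If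
`|X (a n)| < M` and `X` oscillates by `ε` on the block `[a n, b n]`, some `X v` in the block lies at
distance `≥ 2w` from `X (a n)`, so the path crosses one of the `p + 2` intervals inside the block.
Crossings in distinct blocks concatenate, hence summing over blocks
`∑ n, ∑ i, P(crossing of interval i in block n) ≤ (p + 2) L`, so some `n ≤ 2(p+2)L/λ` has
`∑ i, P(…) ≤ λ/2`, and for that block the oscillation has probability `< λ/2 + λ/2`.
-/

def CrossesIn (α β : ℝ) (x : ℕ → ℝ) (s t : ℕ) : Prop :=
  ∃ u v, s ≤ u ∧ u < v ∧ v ≤ t ∧ ((x u ≤ α ∧ β ≤ x v) ∨ (β ≤ x u ∧ x v ≤ α))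

theorem hasCross_card_of_crossesIn {α β : ℝ} {x : ℕ → ℝ} {a b : ℕ → ℕ}
    (hab : ∀ n, a n ≤ b n) (hba : ∀ n, b n ≤ a (n + 1)) (S : Finset ℕ)
    (hS : ∀ n ∈ S, CrossesIn α β x (a n) (b n)) : HasCross α β x S.card := by
  have hsep : ∀ m n, m < n → b m ≤ a n := fun m n hmn =>
    (hba m).trans (monotone_nat_of_le_succ (fun n => (hab n).trans (hba n)) hmn)
  choose! u v hau huv hvb hx using hS
  let idx : ℕ → ℕ := fun l => if h : l < S.card then S.orderEmbOfFin rfl ⟨l, h⟩ else 0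
  have hidx_mem : ∀ l < S.card, idx l ∈ S := fun l hl => by
    simp only [idx, dif_pos hl]
    exact S.orderEmbOfFin_mem rfl _
  have hidx_lt : ∀ l, l + 1 < S.card → idx l < idx (l + 1) := fun l hl => by
    simp only [idx, dif_pos hl, dif_pos (Nat.lt_of_succ_lt hl)]
    exact (S.orderEmbOfFin rfl).strictMono (Fin.mk_lt_mk.2 l.lt_succ_self)
  refine ⟨u ∘ idx, v ∘ idx, fun l hl => huv _ (hidx_mem l hl), fun l hl => ?_,
    fun l hl => hx _ (hidx_mem l hl)⟩
  calc v (idx l) ≤ b (idx l) := hvb _ (hidx_mem l (Nat.lt_of_succ_lt hl))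
    _ ≤ a (idx (l + 1)) := hsep _ _ (hidx_lt l hl)
    _ ≤ u (idx (l + 1)) := hau _ (hidx_mem _ hl)

theorem measurableSet_crossesIn {Ω : Type*} [MeasurableSpace Ω] {X : ℕ → Ω → ℝ}
    (hX : ∀ n, Measurable (X n)) (α β : ℝ) (s t : ℕ) :
    MeasurableSet {ω | CrossesIn α β (X · ω) s t} :=
  measurableSet_setOfPred.2 <| .exists fun _ => .exists fun _ => by fun_prop

theorem sum_measure_crossesIn_le_lintegral_crossInf {Ω : Type*} [MeasurableSpace Ω]
    (μ : Measure Ω) {X : ℕ → Ω → ℝ} (hX : ∀ n, Measurable (X n)) (α β : ℝ) {a b : ℕ → ℕ}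
    (hab : ∀ n, a n ≤ b n) (hba : ∀ n, b n ≤ a (n + 1)) (N : ℕ) :
    ∑ n ∈ Finset.range N, μ {ω | CrossesIn α β (X · ω) (a n) (b n)} ≤
      ∫⁻ ω, crossInf α β (X · ω) ∂μ := by
  calc ∑ n ∈ Finset.range N, μ {ω | CrossesIn α β (X · ω) (a n) (b n)}
      = ∫⁻ ω, ∑ n ∈ Finset.range N,
          {ω | CrossesIn α β (X · ω) (a n) (b n)}.indicator 1 ω ∂μ := by
        rw [lintegral_finsetSum _ fun n _ =>
          measurable_one.indicator (measurableSet_crossesIn hX α β _ _)]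
        simp only [lintegral_indicator_one (measurableSet_crossesIn hX α β _ _)]
    _ ≤ ∫⁻ ω, crossInf α β (X · ω) ∂μ := lintegral_mono fun ω => ?_
  classical
  simp only [Set.indicator_apply, Set.mem_ofPred_eq, Pi.one_apply, Finset.sum_boole]
  refine le_biSup (fun k : ℕ => (k : ℝ≥0∞)) (s := {k | HasCross α β (X · ω) k}) ?_
  exact hasCross_card_of_crossesIn hab hba _ fun n hn => (Finset.mem_filter.1 hn).2

theorem exists_grid_interval_between {c w y z : ℝ} {m : ℕ} (hw : 0 < w) (hm : 0 < m)
    (hz : c + w ≤ z) (hy : y + w ≤ c + m * w) (hyz : y + 2 * w ≤ z) :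
    ∃ i < m, y ≤ c + i * w ∧ c + (i + 1) * w ≤ z := by
  rcases le_or_gt y c with hyc | hcy
  · exact ⟨0, hm, by simpa using hyc, by simpa using hz⟩
  have hq : 0 ≤ (y - c) / w := div_nonneg (by linarith) hw.le
  have hge : y - c ≤ ⌈(y - c) / w⌉₊ * w := (div_le_iff₀ hw).1 (Nat.le_ceil _)
  have hlt : ⌈(y - c) / w⌉₊ * w < y - c + w := by
    have := mul_lt_mul_of_pos_right (Nat.ceil_lt_add_one hq) hw
    rwa [add_mul, one_mul, div_mul_cancel₀ _ hw.ne'] at this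
  refine ⟨⌈(y - c) / w⌉₊, ?_, by linarith, by linarith⟩
  exact_mod_cast (lt_of_mul_lt_mul_right (hlt.trans_le (by linarith)) hw.le : (_ : ℝ) < m)

theorem exists_crossesIn_of_two_mul_le_abs_sub {x : ℕ → ℝ} {c w : ℝ} {m s t v : ℕ}
    (hw : 0 < w) (hlow : c + w ≤ x s) (hhigh : x s + w ≤ c + m * w) (hsv : s ≤ v)
    (hvt : v ≤ t) (hv : 2 * w ≤ |x v - x s|) :
    ∃ i < m, CrossesIn (c + i * w) (c + (i + 1) * w) x s t := by
  have hm : 0 < m := by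
    have : (0 : ℝ) < m := by nlinarith
    exact_mod_cast this
  have hsv' : s < v := lt_of_le_of_ne hsv fun h => by
    subst h
    rw [sub_self, abs_zero] at hv
    linarith
  rcases le_abs.1 hv with hup | hdown
  · obtain ⟨i, hi, hyi, hiz⟩ := exists_grid_interval_between (z := x v) hw hm
      (by linarith) hhigh (by linarith)
    exact ⟨i, hi, s, v, le_rfl, hsv', hvt, Or.inl ⟨hyi, hiz⟩⟩
  · obtain ⟨i, hi, hyi, hiz⟩ := exists_grid_interval_between (y := x v) hw hm
      hlow (by linarith) (by linarith)
    exact ⟨i, hi, s, v, le_rfl, hsv', hvt, Or.inr ⟨hiz, hyi⟩⟩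

theorem exists_crossesIn_of_le_abs_sub {x : ℕ → ℝ} {c w : ℝ} {m s t k l : ℕ} (hw : 0 < w)
    (hlow : c + w ≤ x s) (hhigh : x s + w ≤ c + m * w) (hk : k ∈ Set.Icc s t)
    (hl : l ∈ Set.Icc s t) (hkl : 4 * w ≤ |x k - x l|) :
    ∃ i < m, CrossesIn (c + i * w) (c + (i + 1) * w) x s t := by
  have : 2 * w ≤ |x k - x s| ∨ 2 * w ≤ |x l - x s| := by
    by_contra! h
    linarith [abs_sub_le (x k) (x s) (x l), abs_sub_comm (x s) (x l)]
  rcases this with h | h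
  · exact exists_crossesIn_of_two_mul_le_abs_sub hw hlow hhigh hk.1 hk.2 h
  · exact exists_crossesIn_of_two_mul_le_abs_sub hw hlow hhigh hl.1 hl.2 h

theorem ENNReal.exists_le_ofReal_of_sum_range_le {f : ℕ → ℝ≥0∞} {c K : ℝ} (hc : 0 < c)
    (hK : 0 ≤ K) (hf : ∀ N, ∑ n ∈ Finset.range N, f n ≤ ENNReal.ofReal K) :
    ∃ n : ℕ, (n : ℝ) ≤ K / c ∧ f n ≤ ENNReal.ofReal c := by
  by_contra! h
  set N := ⌊K / c⌋₊
  have hsum : ENNReal.ofReal ((N + 1) * c) < ENNReal.ofReal K := by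
    calc ENNReal.ofReal ((N + 1) * c) = ∑ _n ∈ Finset.range (N + 1), ENNReal.ofReal c := by
          rw [Finset.sum_const, Finset.card_range, nsmul_eq_mul, ENNReal.ofReal_mul (by positivity)]
          norm_cast
      _ < ∑ n ∈ Finset.range (N + 1), f n :=
          ENNReal.sum_lt_sum_of_nonempty Finset.nonempty_range_add_one fun n hn =>
            h n ((Nat.cast_le.2 (Nat.lt_succ_iff.1 (Finset.mem_range.1 hn))).trans
              (Nat.floor_le (by positivity)))
      _ ≤ ENNReal.ofReal K := hf _
  have hlt := (div_lt_iff₀ hc).1 (Nat.lt_floor_add_one (K / c))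
  linarith [(ENNReal.ofReal_lt_ofReal_iff_of_nonneg (by positivity)).1 hsum]

theorem exists_measure_lt_of_subset_union {Ω : Type*} [MeasurableSpace Ω] {μ : Measure Ω}
    {O T : ℕ → Set Ω} {C : ℕ → ℕ → Set Ω} {m : ℕ} {lam L : ℝ} (hlam : 0 < lam) (hL : 0 ≤ L)
    (hcover : ∀ n, O n ⊆ T n ∪ ⋃ i ∈ Finset.range m, C i n)
    (hT : ∀ n, μ (T n) < ENNReal.ofReal (lam / 2))
    (hC : ∀ i < m, ∀ N, ∑ n ∈ Finset.range N, μ (C i n) ≤ ENNReal.ofReal L) :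
    ∃ n : ℕ, (n : ℝ) ≤ 2 * m * L / lam ∧ μ (O n) < ENNReal.ofReal lam := by
  have hsum : ∀ N, ∑ n ∈ Finset.range N, ∑ i ∈ Finset.range m, μ (C i n) ≤
      ENNReal.ofReal (m * L) := fun N => by
    rw [Finset.sum_comm]
    calc ∑ i ∈ Finset.range m, ∑ n ∈ Finset.range N, μ (C i n)
        ≤ ∑ _i ∈ Finset.range m, ENNReal.ofReal L :=
          Finset.sum_le_sum fun i hi => hC i (Finset.mem_range.1 hi) N
      _ = ENNReal.ofReal (m * L) := by
        rw [Finset.sum_const, Finset.card_range, nsmul_eq_mul, ENNReal.ofReal_mul (by positivity),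
          ENNReal.ofReal_natCast]
  obtain ⟨n, hn, hn_small⟩ :=
    ENNReal.exists_le_ofReal_of_sum_range_le (half_pos hlam) (by positivity) hsum
  refine ⟨n, hn.trans_eq (by field_simp), ?_⟩
  calc μ (O n) ≤ μ (T n) + ∑ i ∈ Finset.range m, μ (C i n) :=
        (measure_mono (hcover n)).trans <| (measure_union_le _ _).trans <|
          add_le_add le_rfl (measure_biUnion_finset_le _ _)
    _ < ENNReal.ofReal (lam / 2) + ENNReal.ofReal (lam / 2) :=
        ENNReal.add_lt_add_of_lt_of_le (ne_top_of_le_ne_top ENNReal.ofReal_ne_top hn_small)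
          (hT n) hn_small
    _ = ENNReal.ofReal lam := by
      rw [← ENNReal.ofReal_add (by positivity) (by positivity), add_halves]

theorem stmt13_general {Ω : Type} [MeasurableSpace Ω] (μ : Measure Ω)
    (X : ℕ → Ω → ℝ) (hX : ∀ n, Measurable (X n))
    (lam eps : ℝ) (hlam : 0 < lam) (heps : 0 < eps)
    (M : ℝ) (hM : 0 < M)
    (htight : ∀ n : ℕ, μ {ω | M ≤ |X n ω|} < ENNReal.ofReal (lam / 2))
    (p : ℕ) (hp : p = ⌈8 * M / eps⌉₊)
    (M' : ℝ) (hM' : M' = M * (1 + 2 / (p : ℝ)))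
    (L : ℝ) (hL : 0 < L)
    (hcross : ∀ i : ℕ, i < p + 2 →
      ∫⁻ ω, crossInf (-M' + 2 * M' * (i : ℝ) / ((p : ℝ) + 2))
          (-M' + 2 * M' * ((i : ℝ) + 1) / ((p : ℝ) + 2)) (fun n => X n ω) ∂μ
        ≤ ENNReal.ofReal L)
    (a b : ℕ → ℕ) (hab : ∀ n, a n < b n) (hba : ∀ n, b n ≤ a (n + 1)) :
    ∃ n : ℕ, (n : ℝ) ≤ 2 * ((p : ℝ) + 2) * L / lam ∧
      μ {ω | ∃ k ∈ Set.Icc (a n) (b n), ∃ l ∈ Set.Icc (a n) (b n), eps ≤ |X k ω - X l ω|}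
        < ENNReal.ofReal lam := by
  have hp0 : (0 : ℝ) < p := by rw [hp]; exact_mod_cast Nat.ceil_pos.2 (by positivity)
  set w := 2 * M / p with hw
  have hw0 : 0 < w := by positivity
  have hgrid : ∀ r : ℝ, -M' + 2 * M' * r / ((p : ℝ) + 2) = -M' + r * w := fun r => by
    rw [hM', hw]; field_simp
  have hM'w : M' = M + w := by rw [hM', hw]; field_simp
  have hwidth : ((p : ℝ) + 2) * w = 2 * M' := by rw [hM'w, hw]; field_simp
  have h4w : 4 * w ≤ eps := by
    have := (div_le_iff₀ heps).1 (hp ▸ Nat.le_ceil (8 * M / eps))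
    rw [hw, ← le_div_iff₀' (by norm_num), div_le_iff₀ hp0]
    linarith
  have hcover : ∀ n, {ω | ∃ k ∈ Set.Icc (a n) (b n), ∃ l ∈ Set.Icc (a n) (b n),
      eps ≤ |X k ω - X l ω|} ⊆ {ω | M ≤ |X (a n) ω|} ∪ ⋃ i ∈ Finset.range (p + 2),
        {ω | CrossesIn (-M' + 2 * M' * (i : ℝ) / ((p : ℝ) + 2))
          (-M' + 2 * M' * ((i : ℝ) + 1) / ((p : ℝ) + 2)) (X · ω) (a n) (b n)} := by
    rintro n ω ⟨k, hk, l, hl, hkl⟩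
    refine (le_or_gt M |X (a n) ω|).imp id fun hsmall => ?_
    obtain ⟨i, hi, hi_cross⟩ := exists_crossesIn_of_le_abs_sub (x := (X · ω)) (m := p + 2)
      (c := -M') hw0 (by linarith [(abs_lt.1 hsmall).1])
      (by push_cast; linarith [(abs_lt.1 hsmall).2]) hk hl (h4w.trans hkl)
    exact Set.mem_biUnion (Finset.mem_range.2 hi)
      (by simpa only [hgrid, Set.mem_ofPred_eq] using hi_cross)
  simpa only [Nat.cast_add, Nat.cast_ofNat] using
    exists_measure_lt_of_subset_union hlam hL.le hcover (fun n => htight (a n))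
      fun i hi N => (sum_measure_crossesIn_le_lintegral_crossInf μ hX _ _ (fun n => (hab n).le)
        hba N).trans (hcross i hi)

/-- Fix `λ, ε > 0`. If `M > 0` satisfies `P(|X n| ≥ M) < λ/2` for all `n`, and `L > 0` bounds
`E[Cr_∞([α,β],X)]` for every subinterval `[α,β]` of the partition `𝒫(M(1+2/p), p+2)` of
`[-M(1+2/p), M(1+2/p)]`, with `p = ⌈8M/ε⌉`, then for every chain `a₀ < b₀ ≤ a₁ < b₁ ≤ …`
there is `n ≤ 2(p+2)L/λ` with `P(∃ k, l ∈ [a n, b n], |X k - X l| ≥ ε) < λ`. -/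
theorem stmt13 {Ω : Type} [MeasurableSpace Ω] (μ : Measure Ω) [IsProbabilityMeasure μ]
    (X : ℕ → Ω → ℝ) (hX : ∀ n, Measurable (X n))
    (lam eps : ℝ) (hlam : 0 < lam) (heps : 0 < eps)
    (M : ℝ) (hM : 0 < M)
    (htight : ∀ n : ℕ, μ {ω | M ≤ |X n ω|} < ENNReal.ofReal (lam / 2))
    (p : ℕ) (hp : p = ⌈8 * M / eps⌉₊)
    (M' : ℝ) (hM' : M' = M * (1 + 2 / (p : ℝ)))
    (L : ℝ) (hL : 0 < L)
    (hcross : ∀ i : ℕ, i < p + 2 →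
      ∫⁻ ω, crossInf (-M' + 2 * M' * (i : ℝ) / ((p : ℝ) + 2))
          (-M' + 2 * M' * ((i : ℝ) + 1) / ((p : ℝ) + 2)) (fun n => X n ω) ∂μ
        ≤ ENNReal.ofReal L)
    (a b : ℕ → ℕ) (hab : ∀ n, a n < b n) (hba : ∀ n, b n ≤ a (n + 1)) :
    ∃ n : ℕ, (n : ℝ) ≤ 2 * ((p : ℝ) + 2) * L / lam ∧
      μ {ω | ∃ k ∈ Set.Icc (a n) (b n), ∃ l ∈ Set.Icc (a n) (b n), eps ≤ |X k ω - X l ω|}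
        < ENNReal.ofReal lam :=
  stmt13_general μ X hX lam eps hlam heps M hM htight p hp M' hM' L hL hcross a b hab hba
end

section
/- Let (X_n) be a stochastic process on a probability space (Ω, F, P) such that almost surely the sequence (X_n(ω)) is monotone, and suppose h : (0,1) → [1,∞) is a modulus of tightness for (X_n) (i.e., P(|X_n| ≥ h(λ)) < λ for all λ ∈ (0,1) and all n). Then φ(λ, ε) := (22/(λε)) · h(λ/2) is a learnable rate of uniform convergence for (X_n): for all λ, ε ∈ (0,1) and all naturals a_0 < b_0 ≤ a_1 < b_1 ≤ …, there exists n ≤ φ(λ, ε) with P(∃ i, j ∈ [a_n, b_n] with |X_i − X_j| ≥ ε) < λ. In particular, if sup_{n∈ℕ} ‖X_n‖_∞ < K for some K ≥ 1, then φ(λ, ε) := 22K/(λε) is a learnable rate of uniform convergence. -/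
open MeasureTheory ENNReal

/-! On a monotone path the oscillation over `[a n, b n]` is `|X (a n) - X (b n)|`, and since the
intervals are ordered these increments telescope: at most `2M/ε + 1` of them are `≥ ε` for intervals
starting in `(-M, M)`. Integrating this count, the probabilities of these events for `n ≤ N` sum to
at most `2M/ε + 1`, so once `(N + 1) λ/2` exceeds that bound one of them is at most `λ/2`.
Tightness with `M = h(λ/2)` bounds the probability that `|X (a n)| ≥ M` by another `λ/2`. -/

theorem Finset.sum_Ico_sub_le_of_le_succ {α : Type*} [AddCommGroup α] [PartialOrder α]
    [IsOrderedAddMonoid α] {u v : ℕ → α} (hvu : ∀ n, v n ≤ u (n + 1)) {l m : ℕ} (hlm : l ≤ m) :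
    ∑ n ∈ Finset.Ico l m, (v n - u n) ≤ u m - u l := by
  induction m, hlm using Nat.le_induction with
  | base => simp
  | succ m hlm ih =>
    rw [Finset.sum_Ico_succ_top hlm]
    calc ∑ n ∈ Finset.Ico l m, (v n - u n) + (v m - u m)
        ≤ u m - u l + (v m - u m) := by gcongr
      _ = v m - u l := by abel
      _ ≤ u (m + 1) - u l := by gcongr; exact hvu m

theorem card_le_of_interlaced {u v : ℕ → ℝ} (huv : ∀ n, u n ≤ v n)
    (hvu : ∀ n, v n ≤ u (n + 1)) {ε M : ℝ} (hε : 0 < ε) (hM : 0 ≤ M) {S : Finset ℕ}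
    (hS : ∀ n ∈ S, ε ≤ v n - u n ∧ |u n| < M) :
    (S.card : ℝ) ≤ 2 * M / ε + 1 := by
  rcases S.eq_empty_or_nonempty with rfl | hne
  · simp only [Finset.card_empty, Nat.cast_zero]; positivity
  set m := S.max' hne
  set l := S.min' hne
  have hsub : S.erase m ⊆ Finset.Ico l m := fun n hn =>
    Finset.mem_Ico.2 ⟨S.min'_le n (Finset.mem_of_mem_erase hn),
      (S.le_max' n (Finset.mem_of_mem_erase hn)).lt_of_ne (Finset.ne_of_mem_erase hn)⟩
  have hsum : ((S.erase m).card : ℝ) * ε ≤ u m - u l :=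
    calc ((S.erase m).card : ℝ) * ε = ∑ _n ∈ S.erase m, ε := by simp
      _ ≤ ∑ n ∈ S.erase m, (v n - u n) :=
          Finset.sum_le_sum fun n hn => (hS n (Finset.mem_of_mem_erase hn)).1
      _ ≤ ∑ n ∈ Finset.Ico l m, (v n - u n) :=
          Finset.sum_le_sum_of_subset_of_nonneg hsub fun n _ _ => sub_nonneg.2 (huv n)
      _ ≤ u m - u l := Finset.sum_Ico_sub_le_of_le_succ hvu (S.min'_le m (S.max'_mem hne))
  have hum := abs_lt.1 (hS m (S.max'_mem hne)).2
  have hul := abs_lt.1 (hS l (S.min'_mem hne)).2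
  have hcard : ((S.erase m).card : ℝ) ≤ 2 * M / ε := by
    rw [le_div_iff₀ hε]; linarith
  rw [← Finset.card_erase_add_one (S.max'_mem hne)]
  push_cast
  linarith

theorem abs_sub_le_of_mem_Icc_of_monotone_or_antitone {f : ℕ → ℝ}
    (hf : Monotone f ∨ Antitone f) {a b i j : ℕ} (hi : i ∈ Set.Icc a b) (hj : j ∈ Set.Icc a b) :
    |f i - f j| ≤ |f a - f b| := by
  have hmaps : Set.MapsTo f (Set.uIcc a b) (Set.uIcc (f a) (f b)) :=
    hf.elim Monotone.mapsTo_uIcc Antitone.mapsTo_uIcc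
  exact Real.dist_le_of_mem_uIcc (hmaps (Set.Icc_subset_uIcc hi)) (hmaps (Set.Icc_subset_uIcc hj))

theorem card_le_of_monotone_or_antitone {f : ℕ → ℝ} (hf : Monotone f ∨ Antitone f)
    {a b : ℕ → ℕ} (hab : ∀ n, a n ≤ b n) (hba : ∀ n, b n ≤ a (n + 1)) {ε M : ℝ} (hε : 0 < ε)
    (hM : 0 ≤ M) {S : Finset ℕ} (hS : ∀ n ∈ S, ε ≤ |f (a n) - f (b n)| ∧ |f (a n)| < M) :
    (S.card : ℝ) ≤ 2 * M / ε + 1 := by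
  rcases hf with hf | hf
  · refine card_le_of_interlaced (u := fun n => f (a n)) (v := fun n => f (b n))
      (fun n => hf (hab n)) (fun n => hf (hba n)) hε hM fun n hn => ?_
    obtain ⟨hosc, hbound⟩ := hS n hn
    rw [abs_sub_comm, abs_of_nonneg (sub_nonneg.2 (hf (hab n)))] at hosc
    exact ⟨hosc, hbound⟩
  · refine card_le_of_interlaced (u := fun n => -f (a n)) (v := fun n => -f (b n))
      (fun n => neg_le_neg (hf (hab n))) (fun n => neg_le_neg (hf (hba n))) hε hM fun n hn => ?_
    obtain ⟨hosc, hbound⟩ := hS n hn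
    rw [abs_of_nonneg (sub_nonneg.2 (hf (hab n)))] at hosc
    simpa only [abs_neg, neg_sub_neg] using And.intro hosc hbound

section Probability

variable {Ω : Type*} [MeasurableSpace Ω] {μ : Measure Ω}

theorem exists_measure_le_of_ae_card_le [IsProbabilityMeasure μ] {ι : Type*} {E : ι → Set Ω}
    [∀ i, DecidablePred (· ∈ E i)] (hE : ∀ i, MeasurableSet (E i)) (s : Finset ι) {c δ : ℝ≥0∞}
    (hcard : ∀ᵐ ω ∂μ, (({i ∈ s | ω ∈ E i} : Finset ι).card : ℝ≥0∞) ≤ c) (hc : c < s.card * δ) :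
    ∃ i ∈ s, μ (E i) ≤ δ := by
  have hsum : ∑ i ∈ s, μ (E i) ≤ c :=
    calc ∑ i ∈ s, μ (E i) = ∫⁻ ω, ∑ i ∈ s, (E i).indicator 1 ω ∂μ := by
          rw [lintegral_finsetSum _ fun i _ => measurable_one.indicator (hE i)]
          simp only [lintegral_indicator_one (hE _)]
      _ = ∫⁻ ω, (({i ∈ s | ω ∈ E i} : Finset ι).card : ℝ≥0∞) ∂μ := by
          simp only [Set.indicator_apply, Pi.one_apply, Finset.sum_boole]
      _ ≤ ∫⁻ _, c ∂μ := lintegral_mono_ae hcard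
      _ = c := by simp
  by_contra! hlarge
  have : s.card * δ ≤ ∑ i ∈ s, μ (E i) := by
    simpa only [nsmul_eq_mul] using s.card_nsmul_le_sum _ _ fun i hi => (hlarge i hi).le
  exact (hc.trans_le this).not_ge hsum

theorem measure_le_abs_eq_zero_of_eLpNorm_top_lt {f : Ω → ℝ} {K : ℝ}
    (hf : eLpNorm f ⊤ μ < ENNReal.ofReal K) : μ {ω | K ≤ |f ω|} = 0 := by
  refine measure_mono_null (fun ω hω => ?_) (meas_eLpNormEssSup_lt (f := f))
  rw [eLpNorm_exponent_top] at hf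
  calc eLpNormEssSup f μ < ENNReal.ofReal K := hf
    _ ≤ ‖f ω‖ₑ := by rw [Real.enorm_eq_ofReal_abs]; exact ENNReal.ofReal_le_ofReal hω

def largeOscillation (X : ℕ → Ω → ℝ) (ε : ℝ) (m k : ℕ) : Set Ω :=
  {ω | ∃ i ∈ Set.Icc m k, ∃ j ∈ Set.Icc m k, ε ≤ |X i ω - X j ω|}

theorem measurableSet_largeOscillation {X : ℕ → Ω → ℝ} (hX : ∀ n, Measurable (X n)) (ε : ℝ)
    (m k : ℕ) : MeasurableSet (largeOscillation X ε m k) := by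
  simp only [largeOscillation, Set.ofPred_exists]
  measurability

open Finset in
theorem exists_le_measure_largeOscillation_lt [IsProbabilityMeasure μ] {X : ℕ → Ω → ℝ}
    (hX : ∀ n, Measurable (X n))
    (hmono : ∀ᵐ ω ∂μ, (Monotone fun n => X n ω) ∨ (Antitone fun n => X n ω))
    {lam eps M : ℝ} (hlam : 0 < lam) (heps : eps ∈ Set.Ioo 0 1) (hM : 1 ≤ M)
    (htail : ∀ n, μ {ω | M ≤ |X n ω|} < ENNReal.ofReal (lam / 2))
    {a b : ℕ → ℕ} (hab : ∀ n, a n ≤ b n) (hba : ∀ n, b n ≤ a (n + 1)) :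
    ∃ n : ℕ, (n : ℝ) ≤ 22 / (lam * eps) * M ∧
      μ (largeOscillation X eps (a n) (b n)) < ENNReal.ofReal lam := by
  classical
  obtain ⟨heps0, heps1⟩ := heps
  set N := ⌊22 / (lam * eps) * M⌋₊
  set E : ℕ → Set Ω := fun n => largeOscillation X eps (a n) (b n) ∩ {ω | |X (a n) ω| < M}
  have hE : ∀ n, MeasurableSet (E n) := fun n =>
    (measurableSet_largeOscillation hX _ _ _).inter (measurableSet_lt (hX _).abs measurable_const)
  have hcard : ∀ᵐ ω ∂μ, ((({n ∈ range (N + 1) | ω ∈ E n} : Finset ℕ).card : ℝ≥0∞)) ≤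
      ENNReal.ofReal (2 * M / eps + 1) := by
    filter_upwards [hmono] with ω hω
    rw [← ENNReal.ofReal_natCast]
    refine ENNReal.ofReal_le_ofReal
      (card_le_of_monotone_or_antitone hω hab hba heps0 (by linarith) fun n hn => ?_)
    obtain ⟨⟨i, hi, j, hj, hij⟩, hbound⟩ := (mem_filter.1 hn).2
    exact ⟨hij.trans (abs_sub_le_of_mem_Icc_of_monotone_or_antitone hω hi hj), hbound⟩
  have hc :
      ENNReal.ofReal (2 * M / eps + 1) < (range (N + 1)).card * ENNReal.ofReal (lam / 2) := by
    rw [card_range, ← ENNReal.ofReal_natCast, ← ENNReal.ofReal_mul (by positivity),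
      ENNReal.ofReal_lt_ofReal_iff (by positivity)]
    calc 2 * M / eps + 1 < 11 * M / eps := by
          rw [div_add_one heps0.ne', div_lt_div_iff_of_pos_right heps0]; linarith
      _ = 22 / (lam * eps) * M * (lam / 2) := by field_simp; ring
      _ < ((N + 1 : ℕ) : ℝ) * (lam / 2) := by
          push_cast; gcongr; exact Nat.lt_floor_add_one _
  obtain ⟨n, hn, hEn⟩ := exists_measure_le_of_ae_card_le hE _ hcard hc
  refine ⟨n, ?_, ?_⟩
  · calc (n : ℝ) ≤ N := by exact_mod_cast Nat.lt_succ_iff.1 (mem_range.1 hn)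
      _ ≤ _ := Nat.floor_le (by positivity)
  · calc μ (largeOscillation X eps (a n) (b n))
        ≤ μ (E n) + μ (largeOscillation X eps (a n) (b n) \ {ω | |X (a n) ω| < M}) :=
          measure_le_inter_add_sdiff μ _ _
      _ ≤ μ (E n) + μ {ω | M ≤ |X (a n) ω|} := by
          gcongr; exact fun ω hω => (not_lt.1 hω.2 : M ≤ |X (a n) ω|)
      _ < ENNReal.ofReal (lam / 2) + ENNReal.ofReal (lam / 2) :=
          ENNReal.add_lt_add_of_le_of_lt (by finiteness) hEn (htail _)
      _ = ENNReal.ofReal lam := by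
          rw [← ENNReal.ofReal_add (by positivity) (by positivity), add_halves]

end Probability

/-- If the paths of `X` are almost surely monotone (nondecreasing or nonincreasing) and
`h : (0,1) → [1,∞)` is a modulus of tightness for `X`, then `φ(λ,ε) := (22/(λε))·h(λ/2)` is a
learnable rate of uniform convergence for `X`; and if moreover `sup_n ‖X n‖_∞ < K` for some
`K ≥ 1`, then `φ(λ,ε) := 22K/(λε)` is a learnable rate of uniform convergence. -/
theorem stmt14 {Ω : Type} [MeasurableSpace Ω] (μ : Measure Ω) [IsProbabilityMeasure μ]
    (X : ℕ → Ω → ℝ) (hX : ∀ n, Measurable (X n))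
    (hmono : ∀ᵐ ω ∂μ, (Monotone fun n => X n ω) ∨ (Antitone fun n => X n ω))
    (h : ℝ → ℝ) (hh1 : ∀ lam ∈ Set.Ioo (0 : ℝ) 1, 1 ≤ h lam)
    (htight : ∀ lam ∈ Set.Ioo (0 : ℝ) 1, ∀ n : ℕ,
      μ {ω | h lam ≤ |X n ω|} < ENNReal.ofReal lam) :
    (∀ lam ∈ Set.Ioo (0 : ℝ) 1, ∀ eps ∈ Set.Ioo (0 : ℝ) 1, ∀ a b : ℕ → ℕ,
      (∀ n, a n < b n) → (∀ n, b n ≤ a (n + 1)) →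
      ∃ n : ℕ, (n : ℝ) ≤ 22 / (lam * eps) * h (lam / 2) ∧
        μ {ω | ∃ i ∈ Set.Icc (a n) (b n), ∃ j ∈ Set.Icc (a n) (b n), eps ≤ |X i ω - X j ω|}
          < ENNReal.ofReal lam) ∧
    (∀ K : ℝ, 1 ≤ K → (∀ n, eLpNorm (X n) ⊤ μ < ENNReal.ofReal K) →
      ∀ lam ∈ Set.Ioo (0 : ℝ) 1, ∀ eps ∈ Set.Ioo (0 : ℝ) 1, ∀ a b : ℕ → ℕ,
        (∀ n, a n < b n) → (∀ n, b n ≤ a (n + 1)) →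
        ∃ n : ℕ, (n : ℝ) ≤ 22 * K / (lam * eps) ∧
          μ {ω | ∃ i ∈ Set.Icc (a n) (b n), ∃ j ∈ Set.Icc (a n) (b n), eps ≤ |X i ω - X j ω|}
            < ENNReal.ofReal lam) := by
  refine ⟨fun lam hlam eps heps a b hab hba => ?_, fun K hK hKb lam hlam eps heps a b hab hba => ?_⟩
  · have hlam2 : lam / 2 ∈ Set.Ioo (0 : ℝ) 1 := ⟨by linarith [hlam.1], by linarith [hlam.2]⟩
    exact exists_le_measure_largeOscillation_lt hX hmono hlam.1 heps (hh1 _ hlam2)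
      (htight _ hlam2) (fun n => (hab n).le) hba
  · have htail : ∀ n, μ {ω | K ≤ |X n ω|} < ENNReal.ofReal (lam / 2) := fun n => by
      rw [measure_le_abs_eq_zero_of_eLpNorm_top_lt (hKb n)]
      exact ENNReal.ofReal_pos.2 (half_pos hlam.1)
    obtain ⟨n, hn, hosc⟩ := exists_le_measure_largeOscillation_lt hX hmono hlam.1 heps hK htail
      (fun n => (hab n).le) hba
    exact ⟨n, hn.trans_eq (div_mul_eq_mul_div _ _ _), hosc⟩
end

section
/- There exists a constant c ≤ 220 (independent of p) such that: if (X_n) is a nonnegative submartingale on a probability space with respect to a filtration (F_n), p ∈ [1,∞), and K ≥ 1 satisfies sup_{n∈ℕ} ‖X_n‖_p < K, then φ_p(λ, ε) := (cK²/(λε²)) · (2/λ)^{1/p} is a learnable rate of uniform convergence for (X_n): for all λ, ε ∈ (0,1) and all naturals a_0 < b_0 ≤ a_1 < b_1 ≤ …, there exists n ≤ φ_p(λ, ε) with P(∃ i, j ∈ [a_n, b_n] with |X_i − X_j| ≥ ε) < λ. Moreover, if instead sup_{n∈ℕ} ‖X_n‖_∞ < K, then φ_∞(λ, ε) := cK²/(λε²)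 is a learnable rate of uniform convergence. -/
/-!
Off the event that the path reaches a level `M` before the last window considered, the path stays
in `[0, M)`; Doob's maximal inequality combined with Hölder's inequality bounds the probability of
that event by `(K / M) ^ p`. A window over which the path oscillates by `ε` then contains an up- or
a downcrossing of one of the `O(M / ε)` bands `[m ε / 4, m ε / 4 + ε / 2]`, and distinct windows
crossing a band in the same direction account, up to one, for distinct upcrossings of it. Doob's
upcrossing inequality therefore bounds the expected number of such windows by `O(M K / ε ^ 2)`, so
at most `O(M K / (λ ε ^ 2))` consecutive windows can each oscillate with probability `≥ λ`. The
level `M = K (2 / λ) ^ (1 / p)`, or `M = K` for bounded processes, gives the two rates.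
-/

open MeasureTheory ENNReal

def oscillationEvent {Ω : Type*} (X : ℕ → Ω → ℝ) (ε : ℝ) (s : Set ℕ) : Set Ω :=
  {ω | ∃ i ∈ s, ∃ j ∈ s, ε ≤ |X i ω - X j ω|}

lemma end_le_start_of_lt {a b : ℕ → ℕ} (hab : ∀ n, a n < b n) (hba : ∀ n, b n ≤ a (n + 1))
    {m n : ℕ} (hmn : m < n) : b m ≤ a n :=
  (hba m).trans <| monotone_nat_of_le_succ (fun k => (hab k).le.trans (hba k)) hmn

lemma Finset.card_le_of_strictMonoOn {α : Type*} [LinearOrder α] {S : Finset α} {g : α → ℕ} {k : ℕ}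
    (hg : StrictMonoOn g S) (hk : ∀ n ∈ S, g n < k) : S.card ≤ k := by
  simpa using Finset.card_le_card_of_injOn (t := Finset.range k) g
    (fun n hn => Finset.mem_range.2 (hk n hn)) hg.injOn

lemma exists_band {ε M x y : ℝ} (hε : 0 < ε) (hx : 0 ≤ x) (hxM : x < M) (hxy : x + ε ≤ y) :
    ∃ m ∈ Finset.Icc 1 (⌈4 * M / ε⌉₊ + 1), x < m * (ε / 4) ∧ m * (ε / 4) + ε / 2 < y := by
  have hfloor := Nat.floor_le (show 0 ≤ 4 * x / ε by positivity)
  have hfloor' := Nat.lt_floor_add_one (4 * x / ε)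
  have hq : 4 * x / ε * (ε / 4) = x := by field_simp
  refine ⟨⌊4 * x / ε⌋₊ + 1, Finset.mem_Icc.2 ⟨le_add_self, ?_⟩, ?_, ?_⟩
  · gcongr
    exact (Nat.floor_mono (by gcongr)).trans (Nat.floor_le_ceil _)
  · push_cast
    nlinarith
  · push_cast
    nlinarith

section Crossings

variable {Ω : Type*} {f : ℕ → Ω → ℝ} {ω : Ω} {α β : ℝ} {a b : ℕ → ℕ} {S : Finset ℕ} {T : ℕ}

lemma card_le_upcrossingsBefore (hαβ : α < β) (hsep : ∀ m n, m < n → b m ≤ a n)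
    (hT : ∀ n ∈ S, b n ≤ T)
    (hup : ∀ n ∈ S, ∃ i ∈ Set.Icc (a n) (b n), ∃ j ∈ Set.Icc (a n) (b n),
      i < j ∧ f i ω < α ∧ β < f j ω) :
    S.card ≤ upcrossingsBefore α β f (T + 1) ω := by
  choose! i hi j hj hij hfi hfj using hup
  set u := fun t => upcrossingsBefore α β f t ω
  have hu : Monotone u := fun s t hst => upcrossingsBefore_mono hαβ hst ω
  have hcross : ∀ n ∈ S, u (i n) < u (j n + 1) := fun n hn =>
    upcrossingsBefore_lt_of_exists_upcrossing hαβ le_rfl (hfi n hn) (hij n hn).le (hfj n hn)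
  refine Finset.card_le_of_strictMonoOn (g := fun n => u (i n)) (fun m hm n hn hmn => ?_)
    fun n hn => (hcross n hn).trans_le (hu (by grind))
  -- `j m ≠ i n`, since `f (j m) > β > α > f (i n)`
  have hji : j m < i n := lt_of_le_of_ne ((hj m hm).2.trans ((hsep m n hmn).trans (hi n hn).1))
    fun h => by linarith [h ▸ hfj m hm, hfi n hn]
  exact (hcross m hm).trans_le (hu hji)

lemma card_le_upcrossingsBefore_add_one (hαβ : α < β) (hsep : ∀ m n, m < n → b m ≤ a n)
    (hT : ∀ n ∈ S, b n ≤ T)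
    (hdown : ∀ n ∈ S, ∃ i ∈ Set.Icc (a n) (b n), ∃ j ∈ Set.Icc (a n) (b n),
      i < j ∧ β < f i ω ∧ f j ω < α) :
    S.card ≤ upcrossingsBefore α β f (T + 1) ω + 1 := by
  choose! i hi j hj hij hfi hfj using hdown
  set u := fun t => upcrossingsBefore α β f t ω
  have hu : Monotone u := fun s t hst => upcrossingsBefore_mono hαβ hst ω
  refine Finset.card_le_of_strictMonoOn (g := fun n => u (j n)) (fun m hm n hn hmn => ?_)
    fun n hn => Nat.lt_succ_of_le (hu (by grind))
  -- between two consecutive downcrossings the path crosses up from `α` to `β`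
  exact (upcrossingsBefore_lt_of_exists_upcrossing hαβ le_rfl (hfj m hm)
    ((hj m hm).2.trans ((hsep m n hmn).trans (hi n hn).1)) (hfi n hn)).trans_le (hu (hij n hn))

lemma exists_band_crossing_of_mem_oscillationEvent {ε M : ℝ} {s : Set ℕ} (hε : 0 < ε)
    (hf : ∀ k ∈ s, 0 ≤ f k ω ∧ f k ω < M) (hω : ω ∈ oscillationEvent f ε s) :
    ∃ m ∈ Finset.Icc 1 (⌈4 * M / ε⌉₊ + 1), ∃ i ∈ s, ∃ j ∈ s, i < j ∧
      (f i ω < m * (ε / 4) ∧ m * (ε / 4) + ε / 2 < f j ω ∨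
        m * (ε / 4) + ε / 2 < f i ω ∧ f j ω < m * (ε / 4)) := by
  obtain ⟨i, hi, j, hj, hij⟩ := hω
  obtain ⟨k, hk, l, hl, hkl⟩ : ∃ k ∈ s, ∃ l ∈ s, f k ω + ε ≤ f l ω := by
    rcases le_abs'.1 hij with h | h
    · exact ⟨i, hi, j, hj, by linarith⟩
    · exact ⟨j, hj, i, hi, by linarith⟩
  obtain ⟨m, hm, hkm, hml⟩ := exists_band hε (hf k hk).1 (hf k hk).2 hkl
  refine ⟨m, hm, ?_⟩
  rcases lt_trichotomy k l with hlt | rfl | hgt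
  · exact ⟨k, hk, l, hl, hlt, .inl ⟨hkm, hml⟩⟩
  · linarith
  · exact ⟨l, hl, k, hk, hgt, .inr ⟨hml, hkm⟩⟩

lemma card_oscillating_le_sum_upcrossingsBefore {ε M : ℝ} (hε : 0 < ε)
    (hsep : ∀ m n, m < n → b m ≤ a n) (hT : ∀ n ∈ S, b n ≤ T)
    (hf : ∀ k ≤ T, 0 ≤ f k ω ∧ f k ω < M)
    (hS : ∀ n ∈ S, ω ∈ oscillationEvent f ε (Set.Icc (a n) (b n))) :
    S.card ≤ ∑ m ∈ Finset.Icc 1 (⌈4 * M / ε⌉₊ + 1),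
      (2 * upcrossingsBefore (m * (ε / 4)) (m * (ε / 4) + ε / 2) f (T + 1) ω + 1) := by
  classical
  set up := fun m : ℕ => S.filter fun n => ∃ i ∈ Set.Icc (a n) (b n), ∃ j ∈ Set.Icc (a n) (b n),
    i < j ∧ f i ω < m * (ε / 4) ∧ m * (ε / 4) + ε / 2 < f j ω
  set down := fun m : ℕ => S.filter fun n => ∃ i ∈ Set.Icc (a n) (b n), ∃ j ∈ Set.Icc (a n) (b n),
    i < j ∧ m * (ε / 4) + ε / 2 < f i ω ∧ f j ω < m * (ε / 4)
  have hband : ∀ m : ℕ, (m : ℝ) * (ε / 4) < m * (ε / 4) + ε / 2 := fun m => by linarith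
  calc _ ≤ ((Finset.Icc 1 (⌈4 * M / ε⌉₊ + 1)).biUnion fun m => up m ∪ down m).card := by
        refine Finset.card_le_card fun n hn => ?_
        obtain ⟨m, hm, i, hi, j, hj, hij, hcross | hcross⟩ :=
          exists_band_crossing_of_mem_oscillationEvent hε
            (fun k hk => hf k (hk.2.trans (hT n hn))) (hS n hn)
        · exact Finset.mem_biUnion.2
            ⟨m, hm, Finset.mem_union_left _ (Finset.mem_filter.2 ⟨hn, i, hi, j, hj, hij, hcross⟩)⟩
        · exact Finset.mem_biUnion.2
            ⟨m, hm, Finset.mem_union_right _ (Finset.mem_filter.2 ⟨hn, i, hi, j, hj, hij, hcross⟩)⟩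
    _ ≤ ∑ m ∈ Finset.Icc 1 (⌈4 * M / ε⌉₊ + 1), (up m ∪ down m).card := Finset.card_biUnion_le
    _ ≤ _ := by
        refine Finset.sum_le_sum fun m _ => (Finset.card_union_le _ _).trans ?_
        have hup := card_le_upcrossingsBefore (S := up m) (hband m) hsep
          (fun n hn => hT n (Finset.mem_of_mem_filter n hn)) fun n hn => (Finset.mem_filter.1 hn).2
        have hdown := card_le_upcrossingsBefore_add_one (S := down m) (hband m) hsep
          (fun n hn => hT n (Finset.mem_of_mem_filter n hn)) fun n hn => (Finset.mem_filter.1 hn).2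
        omega

end Crossings

lemma measurableSet_oscillationEvent {Ω : Type*} [MeasurableSpace Ω] {X : ℕ → Ω → ℝ}
    (hX : ∀ n, Measurable (X n)) (ε : ℝ) (s : Set ℕ) : MeasurableSet (oscillationEvent X ε s) := by
  unfold oscillationEvent
  measurability

lemma ENNReal.le_div_rpow_of_mul_le_mul_rpow {x c d : ℝ≥0∞} {p : ℝ} (hp : 0 < p) (hx : x ≠ ∞)
    (hc : c ≠ 0) (hc' : c ≠ ∞) (h : c * x ≤ d * x ^ (1 - 1 / p)) : x ≤ (d / c) ^ p := by
  rcases eq_or_ne x 0 with rfl | hx0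
  · exact zero_le
  have hsplit : x = x ^ (1 / p) * x ^ (1 - 1 / p) := by
    rw [← ENNReal.rpow_add _ _ hx0 hx, add_sub_cancel, ENNReal.rpow_one]
  have hroot : x ^ (1 / p) * c ≤ d := by
    rw [← ENNReal.mul_le_mul_iff_left (c := x ^ (1 - 1 / p)) (ENNReal.rpow_pos
      (pos_iff_ne_zero.2 hx0) hx).ne' (ENNReal.rpow_ne_top_of_ne_zero hx0 hx), mul_right_comm,
      ← hsplit, mul_comm]
    exact h
  calc x = (x ^ (1 / p)) ^ p := by rw [← ENNReal.rpow_mul, one_div_mul_cancel hp.ne', rpow_one]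
    _ ≤ (d / c) ^ p := by
        gcongr
        exact (ENNReal.le_div_iff_mul_le (.inl hc) (.inl hc')).2 hroot

lemma exists_measure_lt_two_mul_of_sum_measure_inter_le {Ω : Type*} [MeasurableSpace Ω]
    {μ : Measure Ω} {E : ℕ → Set Ω} {G : Set Ω} {N : ℕ} {δ C : ℝ≥0∞} (hδ : δ ≠ ∞)
    (hG : μ Gᶜ ≤ δ) (hsum : ∑ n ∈ Finset.range N, μ (E n ∩ G) ≤ C) (hC : C < N * δ) :
    ∃ n < N, μ (E n) < 2 * δ := by
  by_contra! h
  have hlarge : ∀ n ∈ Finset.range N, δ ≤ μ (E n ∩ G) := fun n hn => by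
    refine ENNReal.le_of_add_le_add_right hδ ?_
    calc δ + δ = 2 * δ := (two_mul δ).symm
      _ ≤ μ (E n) := h n (Finset.mem_range.1 hn)
      _ ≤ μ (E n ∩ G) + μ (E n ∩ Gᶜ) := by
          conv_lhs => rw [← Set.inter_union_compl (E n) G]
          exact measure_union_le _ _
      _ ≤ μ (E n ∩ G) + δ := by gcongr; exact (measure_mono Set.inter_subset_right).trans hG
  have := (Finset.card_nsmul_le_sum _ _ _ hlarge).trans hsum
  simp only [Finset.card_range, nsmul_eq_mul] at this
  exact (this.trans_lt hC).false

lemma ae_lt_of_eLpNorm_top_lt {Ω : Type*} [MeasurableSpace Ω] {μ : Measure Ω} {f : Ω → ℝ}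
    {K : ℝ} (h : eLpNorm f ∞ μ < ENNReal.ofReal K) : ∀ᵐ ω ∂μ, f ω < K := by
  filter_upwards [ae_le_eLpNormEssSup (f := f) (μ := μ)] with ω hω
  rw [← eLpNorm_exponent_top] at hω
  have := hω.trans_lt h
  rw [Real.enorm_eq_ofReal_abs, ENNReal.ofReal_lt_ofReal_iff_of_nonneg (abs_nonneg _)] at this
  exact (le_abs_self _).trans_lt this

namespace MeasureTheory.Submartingale

variable {Ω : Type*} {m0 : MeasurableSpace Ω} {μ : Measure Ω} {F : Filtration ℕ m0}
  {X : ℕ → Ω → ℝ}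

lemma lintegral_upcrossingsBefore_le [IsFiniteMeasure μ] (hsub : Submartingale X F μ)
    {α β K : ℝ} (hα : 0 ≤ α) (hαβ : α < β) (hbd : ∀ n, eLpNorm (X n) 1 μ ≤ ENNReal.ofReal K)
    (T : ℕ) : ∫⁻ ω, upcrossingsBefore α β X T ω ∂μ ≤ ENNReal.ofReal (K / (β - α)) := by
  have hmul : ENNReal.ofReal (β - α) * ∫⁻ ω, upcrossingsBefore α β X T ω ∂μ ≤ ENNReal.ofReal K :=
    calc _ ≤ ENNReal.ofReal (β - α) * ∫⁻ ω, upcrossings α β X ω ∂μ := by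
          gcongr with ω
          exact le_iSup (fun T => (upcrossingsBefore α β X T ω : ℝ≥0∞)) T
      _ ≤ ⨆ n, ∫⁻ ω, ENNReal.ofReal ((X n ω - α)⁺) ∂μ :=
          hsub.mul_lintegral_upcrossings_le_lintegral_pos_part α β
      _ ≤ ⨆ n, eLpNorm (X n) 1 μ := by
          gcongr with n
          rw [eLpNorm_one_eq_lintegral_enorm]
          refine lintegral_mono fun ω => ?_
          rw [Real.enorm_eq_ofReal_abs, posPart_def]
          gcongr
          exact max_le (by linarith [le_abs_self (X n ω)]) (abs_nonneg _)
      _ ≤ ENNReal.ofReal K := iSup_le hbd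
  rw [ENNReal.ofReal_div_of_pos (sub_pos.2 hαβ)]
  rw [mul_comm] at hmul
  exact (ENNReal.le_div_iff_mul_le (.inl (by simpa using hαβ)) (.inl ofReal_ne_top)).2 hmul

lemma sum_measure_oscillationEvent_inter_le_sum_lintegral (hsub : Submartingale X F μ)
    (hnonneg : ∀ n, 0 ≤ᵐ[μ] X n) {M ε : ℝ} (hε : 0 < ε) {a b : ℕ → ℕ}
    (hsep : ∀ m n, m < n → b m ≤ a n) {N T : ℕ} (hT : ∀ n < N, b n ≤ T) :
    ∑ n ∈ Finset.range N,
        μ (oscillationEvent X ε (Set.Icc (a n) (b n)) ∩ {ω | ∀ k ≤ T, X k ω < M})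
      ≤ ∑ m ∈ Finset.Icc 1 (⌈4 * M / ε⌉₊ + 1), (2 * ∫⁻ ω,
          upcrossingsBefore (m * (ε / 4)) (m * (ε / 4) + ε / 2) X (T + 1) ω ∂μ + μ Set.univ) := by
  classical
  have hX : ∀ n, Measurable (X n) := fun n => (hsub.stronglyMeasurable n).measurable.le (F.le n)
  set E := fun n => oscillationEvent X ε (Set.Icc (a n) (b n)) ∩ {ω | ∀ k ≤ T, X k ω < M}
  have hE : ∀ n, MeasurableSet (E n) := fun n =>
    (measurableSet_oscillationEvent hX ε _).inter (by measurability)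
  set U := fun (m : ℕ) ω =>
    (upcrossingsBefore (m * (ε / 4)) (m * (ε / 4) + ε / 2) X (T + 1) ω : ℝ≥0∞)
  have hU : ∀ m, Measurable (U m) := fun m => measurable_from_top.comp
    (hsub.stronglyAdapted.measurable_upcrossingsBefore (by linarith))
  have hcount : ∀ᵐ ω ∂μ, ∑ n ∈ Finset.range N, (E n).indicator 1 ω ≤
      ∑ m ∈ Finset.Icc 1 (⌈4 * M / ε⌉₊ + 1), (2 * U m ω + 1) := by
    filter_upwards [ae_all_iff.2 hnonneg] with ω hω
    simp only [Set.indicator_apply, Pi.one_apply]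
    rw [Finset.sum_boole]
    by_cases hG : ∀ k ≤ T, X k ω < M
    · have := card_oscillating_le_sum_upcrossingsBefore
        (S := {n ∈ Finset.range N | ω ∈ E n}) hε hsep
        (fun n hn => hT n (Finset.mem_range.1 (Finset.mem_of_mem_filter n hn)))
        (fun k hk => ⟨hω k, hG k hk⟩) fun n hn => (Finset.mem_filter.1 hn).2.1
      simp only [U]
      exact_mod_cast this
    · rw [Finset.filter_false_of_mem fun n _ hn => hG hn.2]
      simp
  calc ∑ n ∈ Finset.range N, μ (E n)
      = ∫⁻ ω, ∑ n ∈ Finset.range N, (E n).indicator 1 ω ∂μ := by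
        rw [lintegral_finsetSum _ fun n _ => measurable_one.indicator (hE n)]
        simp only [lintegral_indicator_one (hE _)]
    _ ≤ ∫⁻ ω, ∑ m ∈ Finset.Icc 1 (⌈4 * M / ε⌉₊ + 1), (2 * U m ω + 1) ∂μ :=
        lintegral_mono_ae hcount
    _ = _ := by
        rw [lintegral_finsetSum _ fun m _ => ((hU m).const_mul 2).add_const 1]
        simp [lintegral_add_right _ measurable_const, lintegral_const_mul _ (hU _), U]

lemma sum_measure_oscillationEvent_inter_le [IsProbabilityMeasure μ] (hsub : Submartingale X F μ)
    (hnonneg : ∀ n, 0 ≤ᵐ[μ] X n) {K M ε : ℝ} (hε : 0 < ε) (hεK : ε ≤ K) (hKM : K ≤ M)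
    (hbd : ∀ n, eLpNorm (X n) 1 μ ≤ ENNReal.ofReal K) {a b : ℕ → ℕ}
    (hsep : ∀ m n, m < n → b m ≤ a n) {N T : ℕ} (hT : ∀ n < N, b n ≤ T) :
    ∑ n ∈ Finset.range N,
        μ (oscillationEvent X ε (Set.Icc (a n) (b n)) ∩ {ω | ∀ k ≤ T, X k ω < M})
      ≤ ENNReal.ofReal (30 * M * K / ε ^ 2) := by
  have hKε : 1 ≤ K / ε := (one_le_div hε).2 hεK
  have hMε : 1 ≤ M / ε := (one_le_div hε).2 (hεK.trans hKM)
  set L := ⌈4 * M / ε⌉₊ + 1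
  calc _ ≤ _ := hsub.sum_measure_oscillationEvent_inter_le_sum_lintegral hnonneg hε hsep hT
    _ ≤ (Finset.Icc 1 L).card • (2 * ENNReal.ofReal (K / (ε / 2)) + 1) := by
        refine Finset.sum_le_card_nsmul _ _ _ fun m _ => ?_
        rw [measure_univ]
        gcongr
        have h := hsub.lintegral_upcrossingsBefore_le (α := m * (ε / 4))
          (β := m * (ε / 4) + ε / 2) (by positivity) (by linarith) hbd (T + 1)
        rwa [add_sub_cancel_left] at h
    _ = ENNReal.ofReal (L * (4 * (K / ε) + 1)) := by
        rw [Nat.card_Icc, add_tsub_cancel_right, nsmul_eq_mul, ENNReal.ofReal_mul (by positivity),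
          ENNReal.ofReal_natCast, ENNReal.ofReal_add (by linarith) zero_le_one, ofReal_one,
          show 4 * (K / ε) = 2 * (K / (ε / 2)) by ring, ENNReal.ofReal_mul zero_le_two,
          ofReal_ofNat]
    _ ≤ ENNReal.ofReal (30 * M * K / ε ^ 2) := by
        gcongr
        have hL : (L : ℝ) ≤ 6 * (M / ε) := by
          have hceil := Nat.ceil_lt_add_one (show 0 ≤ 4 * M / ε by
            rw [mul_div_assoc]; linarith)
          push_cast [L]
          linarith [show 4 * M / ε = 4 * (M / ε) by ring]
        calc (L : ℝ) * (4 * (K / ε) + 1) ≤ 6 * (M / ε) * (5 * (K / ε)) := by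
              gcongr; linarith
          _ = 30 * M * K / ε ^ 2 := by ring

theorem measure_exists_le_le_rpow [IsFiniteMeasure μ] (hsub : Submartingale X F μ) {p M : ℝ}
    (hp : 1 ≤ p) (hM : 0 < M) (T : ℕ) :
    μ {ω | ∃ k ≤ T, M ≤ X k ω} ≤ (eLpNorm (X T) (ENNReal.ofReal p) μ / ENNReal.ofReal M) ^ p := by
  set Y := fun n ω => (X n ω)⁺
  set A := {ω | (M.toNNReal : ℝ) ≤
    (Finset.range (T + 1)).sup' Finset.nonempty_range_add_one fun k => Y k ω}
  have hsubset : {ω | ∃ k ≤ T, M ≤ X k ω} ⊆ A := by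
    rintro ω ⟨k, hk, hMk⟩
    simp only [A, Set.mem_ofPred_eq, Real.coe_toNNReal _ hM.le, Finset.le_sup'_iff]
    exact ⟨k, Finset.mem_range.2 (Nat.lt_succ_of_le hk), hMk.trans (le_posPart _)⟩
  have hY : eLpNorm (Y T) (ENNReal.ofReal p) (μ.restrict A) ≤ eLpNorm (X T) (ENNReal.ofReal p) μ :=
    (eLpNorm_mono_measure _ Measure.restrict_le_self).trans <| eLpNorm_mono fun ω => by
      rw [Real.norm_eq_abs, Real.norm_eq_abs, abs_of_nonneg (posPart_nonneg _), posPart_def]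
      exact max_le (le_abs_self _) (abs_nonneg _)
  have hholder : ENNReal.ofReal M * μ A ≤ eLpNorm (X T) (ENNReal.ofReal p) μ * μ A ^ (1 - 1 / p) :=
    calc ENNReal.ofReal M * μ A ≤ ENNReal.ofReal (∫ ω in A, Y T ω ∂μ) :=
          maximal_ineq hsub.pos (fun n ω => posPart_nonneg _) T
      _ ≤ eLpNorm (Y T) 1 (μ.restrict A) := by
          rw [eLpNorm_one_eq_lintegral_enorm]
          exact (Real.ofReal_le_enorm _).trans (enorm_integral_le_lintegral_enorm _)
      _ ≤ eLpNorm (Y T) (ENNReal.ofReal p) (μ.restrict A) * μ.restrict A Set.univ ^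
            (1 / (1 : ℝ≥0∞).toReal - 1 / (ENNReal.ofReal p).toReal) :=
          eLpNorm_le_eLpNorm_mul_rpow_measure_univ (ENNReal.one_le_ofReal.2 hp)
            (hsub.pos.integrable T).aestronglyMeasurable.restrict
      _ ≤ _ := by
          rw [Measure.restrict_apply_univ, toReal_one, one_div_one,
            toReal_ofReal (by linarith)]
          gcongr
  exact (measure_mono hsubset).trans <| ENNReal.le_div_rpow_of_mul_le_mul_rpow (by linarith)
    (measure_ne_top μ A) (by simpa using hM) ofReal_ne_top hholder

theorem exists_measure_oscillationEvent_lt [IsProbabilityMeasure μ] (hsub : Submartingale X F μ)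
    (hnonneg : ∀ n, 0 ≤ᵐ[μ] X n) {K M ε lam : ℝ} (hε : 0 < ε) (hεK : ε ≤ K) (hKM : K ≤ M)
    (hlam : 0 < lam) (hbd : ∀ n, eLpNorm (X n) 1 μ ≤ ENNReal.ofReal K)
    (hmax : ∀ T, μ {ω | ∃ k ≤ T, M ≤ X k ω} ≤ ENNReal.ofReal (lam / 2))
    {a b : ℕ → ℕ} (hab : ∀ n, a n < b n) (hba : ∀ n, b n ≤ a (n + 1)) :
    ∃ n : ℕ, (n : ℝ) ≤ 60 * M * K / (lam * ε ^ 2) ∧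
      μ (oscillationEvent X ε (Set.Icc (a n) (b n))) < ENNReal.ofReal lam := by
  set B := 60 * M * K / (lam * ε ^ 2)
  have hB : 0 ≤ B := by
    have : 0 ≤ K := hε.le.trans hεK
    have : 0 ≤ M := this.trans hKM
    positivity
  set N := ⌊B⌋₊ + 1
  have hsep : ∀ m n, m < n → b m ≤ a n := fun m n => end_le_start_of_lt hab hba
  have hG : μ {ω | ∀ k ≤ a N, X k ω < M}ᶜ ≤ ENNReal.ofReal (lam / 2) :=
    (measure_mono fun ω hω => by simpa using hω).trans (hmax (a N))
  have hC : ENNReal.ofReal (30 * M * K / ε ^ 2) < N * ENNReal.ofReal (lam / 2) := by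
    rw [← ENNReal.ofReal_natCast, ← ENNReal.ofReal_mul (Nat.cast_nonneg _),
      ENNReal.ofReal_lt_ofReal_iff (by positivity)]
    calc 30 * M * K / ε ^ 2 = B * (lam / 2) := by simp only [B]; field_simp; ring
      _ < N * (lam / 2) := by gcongr; exact_mod_cast Nat.lt_floor_add_one B
  obtain ⟨n, hnN, hn⟩ := exists_measure_lt_two_mul_of_sum_measure_inter_le ofReal_ne_top hG
    (hsub.sum_measure_oscillationEvent_inter_le hnonneg hε hεK hKM hbd hsep
      fun n hn => hsep n N hn) hC
  refine ⟨n, (Nat.cast_le.2 (Nat.lt_succ_iff.1 hnN)).trans (Nat.floor_le hB), ?_⟩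
  rwa [← ENNReal.ofReal_ofNat 2, ← ENNReal.ofReal_mul zero_le_two, mul_div_cancel₀ _ two_ne_zero]
    at hn

theorem exists_measure_oscillationEvent_lt_of_eLpNorm_lt [IsProbabilityMeasure μ]
    (hsub : Submartingale X F μ) (hnonneg : ∀ n, 0 ≤ᵐ[μ] X n) {p K ε lam : ℝ} (hp : 1 ≤ p)
    (hbd : ∀ n, eLpNorm (X n) (ENNReal.ofReal p) μ < ENNReal.ofReal K)
    (hlam : 0 < lam) (hlam2 : lam ≤ 2) (hε : 0 < ε) (hεK : ε ≤ K)
    {a b : ℕ → ℕ} (hab : ∀ n, a n < b n) (hba : ∀ n, b n ≤ a (n + 1)) :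
    ∃ n : ℕ, (n : ℝ) ≤ 60 * K ^ 2 / (lam * ε ^ 2) * (2 / lam) ^ (1 / p) ∧
      μ (oscillationEvent X ε (Set.Icc (a n) (b n))) < ENNReal.ofReal lam := by
  have hK : 0 < K := hε.trans_le hεK
  set c := (2 / lam) ^ (1 / p)
  have hc : 1 ≤ c := Real.one_le_rpow ((one_le_div hlam).2 hlam2) (by positivity)
  have hcp : c ^ p = 2 / lam := by
    simp only [c, one_div]
    exact Real.rpow_inv_rpow (by positivity) (by linarith)
  have hmax : ∀ T, μ {ω | ∃ k ≤ T, K * c ≤ X k ω} ≤ ENNReal.ofReal (lam / 2) := fun T =>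
    calc _ ≤ (eLpNorm (X T) (ENNReal.ofReal p) μ / ENNReal.ofReal (K * c)) ^ p :=
          hsub.measure_exists_le_le_rpow hp (by positivity) T
      _ ≤ (ENNReal.ofReal K / ENNReal.ofReal (K * c)) ^ p := by gcongr; exact (hbd T).le
      _ = ENNReal.ofReal (lam / 2) := by
          rw [← ENNReal.ofReal_div_of_pos (by positivity),
            ENNReal.ofReal_rpow_of_nonneg (by positivity) (by linarith),
            div_mul_cancel_left₀ hK.ne', Real.inv_rpow (by positivity), hcp, inv_div]
  have hbd1 : ∀ n, eLpNorm (X n) 1 μ ≤ ENNReal.ofReal K := fun n =>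
    (eLpNorm_le_eLpNorm_of_exponent_le (ENNReal.one_le_ofReal.2 hp)
      (hsub.integrable n).aestronglyMeasurable).trans (hbd n).le
  obtain ⟨n, hn, h⟩ := hsub.exists_measure_oscillationEvent_lt hnonneg hε hεK
    (le_mul_of_one_le_right hK.le hc) hlam hbd1 hmax hab hba
  exact ⟨n, hn.trans_eq (by ring), h⟩

theorem exists_measure_oscillationEvent_lt_of_eLpNorm_top_lt [IsProbabilityMeasure μ]
    (hsub : Submartingale X F μ) (hnonneg : ∀ n, 0 ≤ᵐ[μ] X n) {K ε lam : ℝ}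
    (hbd : ∀ n, eLpNorm (X n) ∞ μ < ENNReal.ofReal K) (hlam : 0 < lam) (hε : 0 < ε)
    (hεK : ε ≤ K) {a b : ℕ → ℕ} (hab : ∀ n, a n < b n) (hba : ∀ n, b n ≤ a (n + 1)) :
    ∃ n : ℕ, (n : ℝ) ≤ 60 * K ^ 2 / (lam * ε ^ 2) ∧
      μ (oscillationEvent X ε (Set.Icc (a n) (b n))) < ENNReal.ofReal lam := by
  have hmax : ∀ T, μ {ω | ∃ k ≤ T, K ≤ X k ω} ≤ ENNReal.ofReal (lam / 2) := fun T => by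
    refine (measure_mono_null (fun ω ⟨k, _, hk⟩ hlt => (hk.not_gt (hlt k)))
      (ae_iff.1 (ae_all_iff.2 fun n => ae_lt_of_eLpNorm_top_lt (hbd n)))).trans_le zero_le
  have hbd1 : ∀ n, eLpNorm (X n) 1 μ ≤ ENNReal.ofReal K := fun n =>
    (eLpNorm_le_eLpNorm_of_exponent_le le_top (hsub.integrable n).aestronglyMeasurable).trans
      (hbd n).le
  obtain ⟨n, hn, h⟩ := hsub.exists_measure_oscillationEvent_lt hnonneg hε hεK le_rfl hlam hbd1
    hmax hab hba
  exact ⟨n, hn.trans_eq (by ring), h⟩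

end MeasureTheory.Submartingale

/-- **Quantitative positive submartingale convergence theorem.** There is a constant
`c ≤ 220` (independent of `p`) such that for every nonnegative submartingale `X` and
`p ∈ [1,∞)`, `K ≥ 1` with `sup_n ‖X n‖_p < K`, the function
`φ_p(λ,ε) := (cK²/(λε²))·(2/λ)^(1/p)` is a learnable rate of uniform convergence for `X`;
and if instead `sup_n ‖X n‖_∞ < K`, then `φ_∞(λ,ε) := cK²/(λε²)` is a learnable rate of
uniform convergence. -/
theorem stmt15 :
    ∃ c : ℝ, 0 < c ∧ c ≤ 220 ∧
      ∀ (Ω : Type) (m0 : MeasurableSpace Ω) (μ : Measure Ω), IsProbabilityMeasure μ →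
      ∀ (F : Filtration ℕ m0) (X : ℕ → Ω → ℝ),
        Submartingale X F μ → (∀ n, 0 ≤ᵐ[μ] X n) →
        ((∀ p K : ℝ, 1 ≤ p → 1 ≤ K →
            (∀ n, eLpNorm (X n) (ENNReal.ofReal p) μ < ENNReal.ofReal K) →
            ∀ lam ∈ Set.Ioo (0 : ℝ) 1, ∀ eps ∈ Set.Ioo (0 : ℝ) 1, ∀ a b : ℕ → ℕ,
              (∀ n, a n < b n) → (∀ n, b n ≤ a (n + 1)) →
              ∃ n : ℕ, (n : ℝ) ≤ c * K ^ 2 / (lam * eps ^ 2) * (2 / lam) ^ (1 / p) ∧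
                μ {ω | ∃ i ∈ Set.Icc (a n) (b n), ∃ j ∈ Set.Icc (a n) (b n),
                    eps ≤ |X i ω - X j ω|} < ENNReal.ofReal lam) ∧
          (∀ K : ℝ, 1 ≤ K →
            (∀ n, eLpNorm (X n) ⊤ μ < ENNReal.ofReal K) →
            ∀ lam ∈ Set.Ioo (0 : ℝ) 1, ∀ eps ∈ Set.Ioo (0 : ℝ) 1, ∀ a b : ℕ → ℕ,
              (∀ n, a n < b n) → (∀ n, b n ≤ a (n + 1)) →
              ∃ n : ℕ, (n : ℝ) ≤ c * K ^ 2 / (lam * eps ^ 2) ∧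
                μ {ω | ∃ i ∈ Set.Icc (a n) (b n), ∃ j ∈ Set.Icc (a n) (b n),
                    eps ≤ |X i ω - X j ω|} < ENNReal.ofReal lam)) := by
  refine ⟨60, by norm_num, by norm_num, fun Ω m0 μ _ F X hsub hnonneg => ⟨?_, ?_⟩⟩
  · intro p K hp hK hbd lam hlam eps heps a b hab hba
    exact hsub.exists_measure_oscillationEvent_lt_of_eLpNorm_lt hnonneg hp hbd hlam.1
      (by linarith [hlam.2]) heps.1 (heps.2.le.trans hK) hab hba
  · intro K hK hbd lam hlam eps heps a b hab hba
    exact hsub.exists_measure_oscillationEvent_lt_of_eLpNorm_top_lt hnonneg hbd hlam.1 heps.1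
      (heps.2.le.trans hK) hab hba
end

section
/- Let (X_n) and (Y_n) be stochastic processes on the same probability space with learnable rates of uniform convergence φ₁ and φ₂, respectively. Then φ(λ, ε) := φ₁(λ/2, ε/2) + φ₂(λ/2, ε/2) is a learnable rate of uniform convergence for the process (X_n + Y_n). -/
open MeasureTheory ENNReal

/-- `φ` is a learnable rate of uniform convergence for the process `Z`: for all
`λ, ε ∈ (0,1)` and all naturals `a₀ < b₀ ≤ a₁ < b₁ ≤ …`, there is `n ≤ φ(λ,ε)` with
`P(∃ i, j ∈ [a n, b n], |Z i - Z j| ≥ ε) < λ`. -/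
def IsLearnableRateUnif {Ω : Type} [MeasurableSpace Ω] (μ : Measure Ω)
    (Z : ℕ → Ω → ℝ) (φ : ℝ → ℝ → ℝ) : Prop :=
  ∀ lam ∈ Set.Ioo (0 : ℝ) 1, ∀ eps ∈ Set.Ioo (0 : ℝ) 1, ∀ a b : ℕ → ℕ,
    (∀ n, a n < b n) → (∀ n, b n ≤ a (n + 1)) →
    ∃ n : ℕ, (n : ℝ) ≤ φ lam eps ∧
      μ {ω | ∃ i ∈ Set.Icc (a n) (b n), ∃ j ∈ Set.Icc (a n) (b n), eps ≤ |Z i ω - Z j ω|}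
        < ENNReal.ofReal lam

/-!
Call an interval `[s, t]` bad for `Z` at `(λ, ε)` if `Z` oscillates by at least `ε` on it with
probability at least `λ`. Oscillation `ε` of `X + Y` forces oscillation `ε/2` of `X` or of `Y`,
so an interval bad for `X + Y` at `(λ, ε)` is bad for `X` or for `Y` at `(λ/2, ε/2)`.
A learnable rate `φ` caps the number of bad intervals in any admissible sequence at `φ`:
the bad ones, listed in order, form an admissible sequence whose first `⌊φ⌋ + 1` terms are all
bad. So at most `φ₁ + φ₂` of the first `⌊φ₁ + φ₂⌋ + 1` intervals are bad for `X + Y`,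
leaving a good one.
-/

open Finset

def oscillationSet {Ω : Type} (Z : ℕ → Ω → ℝ) (eps : ℝ) (s t : ℕ) : Set Ω :=
  {ω | ∃ i ∈ Set.Icc s t, ∃ j ∈ Set.Icc s t, eps ≤ |Z i ω - Z j ω|}

lemma oscillationSet_add_subset {Ω : Type} (X Y : ℕ → Ω → ℝ) (ε₁ ε₂ : ℝ) (s t : ℕ) :
    oscillationSet (fun n ω => X n ω + Y n ω) (ε₁ + ε₂) s t ⊆
      oscillationSet X ε₁ s t ∪ oscillationSet Y ε₂ s t := by
  rintro ω ⟨i, hi, j, hj, hij⟩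
  rw [add_sub_add_comm] at hij
  by_contra! hω
  simp only [Set.mem_union, not_or] at hω
  have hX : |X i ω - X j ω| < ε₁ := not_le.mp fun h => hω.1 ⟨i, hi, j, hj, h⟩
  have hY : |Y i ω - Y j ω| < ε₂ := not_le.mp fun h => hω.2 ⟨i, hi, j, hj, h⟩
  linarith [abs_add_le (X i ω - X j ω) (Y i ω - Y j ω)]

lemma ENNReal.half_le_or_half_le_of_le_add {lam : ℝ} (hlam : 0 ≤ lam) {x y : ℝ≥0∞}
    (h : ENNReal.ofReal lam ≤ x + y) :
    ENNReal.ofReal (lam / 2) ≤ x ∨ ENNReal.ofReal (lam / 2) ≤ y := by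
  by_contra! hxy
  have hsum := ENNReal.add_lt_add hxy.1 hxy.2
  rw [← ENNReal.ofReal_add (by positivity) (by positivity), add_halves] at hsum
  exact (h.trans_lt hsum).false

lemma Finset.exists_strictMono_forall_lt_card_mem (S : Finset ℕ) :
    ∃ g : ℕ → ℕ, StrictMono g ∧ ∀ n < #S, g n ∈ S := by
  let e := S.orderEmbOfFin rfl
  let g : ℕ → ℕ := fun n => if h : n < #S then e ⟨n, h⟩ else S.sup id + 1 + n
  refine ⟨g, strictMono_nat_of_lt_succ fun n => ?_, fun n hn => ?_⟩
  · by_cases hn1 : n + 1 < #S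
    · simp only [g, dif_pos hn1, dif_pos (Nat.lt_of_succ_lt hn1)]
      exact e.strictMono (Fin.mk_lt_mk.mpr n.lt_succ_self)
    by_cases hn : n < #S
    · have : e ⟨n, hn⟩ ≤ S.sup id := le_sup (f := id) (S.orderEmbOfFin_mem rfl _)
      simp only [g, dif_pos hn, dif_neg hn1]
      omega
    · simp only [g, dif_neg hn, dif_neg hn1]
      omega
  · simpa only [g, dif_pos hn] using S.orderEmbOfFin_mem rfl ⟨n, hn⟩

lemma ofReal_half_le_measure_oscillationSet_or {Ω : Type} [MeasurableSpace Ω] {μ : Measure Ω}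
    {X Y : ℕ → Ω → ℝ} {lam eps : ℝ} {s t : ℕ} (hlam : 0 ≤ lam)
    (h : ENNReal.ofReal lam ≤ μ (oscillationSet (fun n ω => X n ω + Y n ω) eps s t)) :
    ENNReal.ofReal (lam / 2) ≤ μ (oscillationSet X (eps / 2) s t) ∨
      ENNReal.ofReal (lam / 2) ≤ μ (oscillationSet Y (eps / 2) s t) := by
  have hsub := oscillationSet_add_subset X Y (eps / 2) (eps / 2) s t
  rw [add_halves] at hsub
  exact ENNReal.half_le_or_half_le_of_le_add hlam
    (h.trans ((measure_mono hsub).trans (measure_union_le _ _)))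

section LearnableRate

variable {Ω : Type} [MeasurableSpace Ω] {μ : Measure Ω} {Z : ℕ → Ω → ℝ} {φ : ℝ → ℝ → ℝ}
  {lam eps : ℝ} {a b : ℕ → ℕ}

lemma IsLearnableRateUnif.card_le (h : IsLearnableRateUnif μ Z φ) (hlam : lam ∈ Set.Ioo 0 1)
    (heps : eps ∈ Set.Ioo 0 1) (hab : ∀ n, a n < b n) (hba : ∀ n, b n ≤ a (n + 1))
    (S : Finset ℕ) (hS : ∀ n ∈ S, ENNReal.ofReal lam ≤ μ (oscillationSet Z eps (a n) (b n))) :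
    (#S : ℝ) ≤ φ lam eps := by
  obtain ⟨g, hg, hgS⟩ := S.exists_strictMono_forall_lt_card_mem
  have ha : StrictMono a := strictMono_nat_of_lt_succ fun n => (hab n).trans_le (hba n)
  obtain ⟨n, hnφ, hn⟩ := h lam hlam eps heps (a ∘ g) (b ∘ g) (fun n => hab (g n))
    fun n => (hba (g n)).trans (ha.monotone (hg n.lt_succ_self))
  by_contra! hφ
  have hnS : n < #S := by exact_mod_cast hnφ.trans_lt hφ
  exact (hS (g n) (hgS n hnS)).not_gt hn

lemma IsLearnableRateUnif.nonneg (h : IsLearnableRateUnif μ Z φ) (hlam : lam ∈ Set.Ioo 0 1)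
    (heps : eps ∈ Set.Ioo 0 1) : 0 ≤ φ lam eps := by
  simpa using h.card_le hlam heps (a := fun n => 2 * n) (b := fun n => 2 * n + 1)
    (fun n => by omega) (fun n => by omega) ∅ (by simp)

end LearnableRate

theorem stmt16_general {Ω : Type} [MeasurableSpace Ω] (μ : Measure Ω)
    (X Y : ℕ → Ω → ℝ)
    (φ₁ φ₂ : ℝ → ℝ → ℝ)
    (h₁ : IsLearnableRateUnif μ X φ₁) (h₂ : IsLearnableRateUnif μ Y φ₂) :
    IsLearnableRateUnif μ (fun n ω => X n ω + Y n ω)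
      (fun lam eps => φ₁ (lam / 2) (eps / 2) + φ₂ (lam / 2) (eps / 2)) := by
  intro lam hlam eps heps a b hab hba
  have hlam2 : lam / 2 ∈ Set.Ioo (0 : ℝ) 1 := ⟨by linarith [hlam.1], by linarith [hlam.2]⟩
  have heps2 : eps / 2 ∈ Set.Ioo (0 : ℝ) 1 := ⟨by linarith [heps.1], by linarith [heps.2]⟩
  set c := φ₁ (lam / 2) (eps / 2) + φ₂ (lam / 2) (eps / 2)
  have hc : 0 ≤ c := add_nonneg (h₁.nonneg hlam2 heps2) (h₂.nonneg hlam2 heps2)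
  by_contra! hbad
  let bad (Z : ℕ → Ω → ℝ) : Finset ℕ := {n ∈ range (⌊c⌋₊ + 1) |
    ENNReal.ofReal (lam / 2) ≤ μ (oscillationSet Z (eps / 2) (a n) (b n))}
  have hcover : range (⌊c⌋₊ + 1) ⊆ bad X ∪ bad Y := by
    intro n hn
    have hnc : (n : ℝ) ≤ c := (Nat.cast_le.mpr (mem_range_succ_iff.mp hn)).trans (Nat.floor_le hc)
    rcases ofReal_half_le_measure_oscillationSet_or hlam.1.le (hbad n hnc) with hX | hY
    · exact mem_union_left _ (mem_filter.mpr ⟨hn, hX⟩)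
    · exact mem_union_right _ (mem_filter.mpr ⟨hn, hY⟩)
  have hcard : ((⌊c⌋₊ + 1 : ℕ) : ℝ) ≤ #(bad X) + #(bad Y) := by
    exact_mod_cast (card_range _ ▸ card_le_card hcover).trans (card_union_le _ _)
  have hX := h₁.card_le hlam2 heps2 hab hba (bad X) fun n hn => (mem_filter.mp hn).2
  have hY := h₂.card_le hlam2 heps2 hab hba (bad Y) fun n hn => (mem_filter.mp hn).2
  push_cast at hcard
  linarith [Nat.lt_floor_add_one c]

/-- If `X` and `Y` have learnable rates of uniform convergence `φ₁` and `φ₂` respectively,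
then `φ(λ,ε) := φ₁(λ/2, ε/2) + φ₂(λ/2, ε/2)` is a learnable rate of uniform convergence for
the process `X + Y`. -/
theorem stmt16 {Ω : Type} [MeasurableSpace Ω] (μ : Measure Ω) [IsProbabilityMeasure μ]
    (X Y : ℕ → Ω → ℝ) (hX : ∀ n, Measurable (X n)) (hY : ∀ n, Measurable (Y n))
    (φ₁ φ₂ : ℝ → ℝ → ℝ)
    (h₁ : IsLearnableRateUnif μ X φ₁) (h₂ : IsLearnableRateUnif μ Y φ₂) :
    IsLearnableRateUnif μ (fun n ω => X n ω + Y n ω)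
      (fun lam eps => φ₁ (lam / 2) (eps / 2) + φ₂ (lam / 2) (eps / 2)) :=
  stmt16_general μ X Y φ₁ φ₂ h₁ h₂
end
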